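/- arXiv:1004.1584 — 13 statements merged into one kernel-verified Lean document; each statement's English description precedes it below -/
import Mathlib

section
/- Let A : X → Y and B : Y → X be linear maps between vector spaces, let λ be a nonzero scalar, and let n ≥ 1. Then A restricted to ker((BA − λ)^n) is a bijection onto ker((AB − λ)^n), and in the case n = 1 its inverse is given by λ^{-n} B restricted to ker((AB − λ)^n). -/
/-- `A` maps `ker ((BA - λ)^n)` bijectively onto `ker ((AB - λ)^n)`,
and in the case `n = 1` the inverse is `λ⁻¹ • B` restricted to `ker (AB - λ)`. -/
theorem stmt0 {𝕜 X Y : Type*} [Field 𝕜] [AddCommGroup X] [Module 𝕜 X]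
    [AddCommGroup Y] [Module 𝕜 Y] (A : X →ₗ[𝕜] Y) (B : Y →ₗ[𝕜] X)
    (l : 𝕜) (hl : l ≠ 0) (n : ℕ) (hn : 1 ≤ n) :
    Set.BijOn A
      (LinearMap.ker ((B ∘ₗ A - l • LinearMap.id) ^ n) : Set X)
      (LinearMap.ker ((A ∘ₗ B - l • LinearMap.id) ^ n) : Set Y) ∧
    (∀ y ∈ LinearMap.ker (A ∘ₗ B - l • LinearMap.id),
        A (l⁻¹ • B y) = y) ∧
    (∀ x ∈ LinearMap.ker (B ∘ₗ A - l • LinearMap.id),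
        l⁻¹ • B (A x) = x) := by
  set S : X →ₗ[𝕜] X := B ∘ₗ A - l • LinearMap.id with hSdef
  set T : Y →ₗ[𝕜] Y := A ∘ₗ B - l • LinearMap.id with hTdef
  have hSapp : ∀ x : X, S x = B (A x) - l • x := by
    intro x; simp [hSdef, LinearMap.sub_apply]
  have hTapp : ∀ y : Y, T y = A (B y) - l • y := by
    intro y; simp [hTdef, LinearMap.sub_apply]
  have comm : ∀ x : X, T (A x) = A (S x) := by
    intro x; rw [hSapp, hTapp, map_sub, map_smul]
  have commn : ∀ m : ℕ, ∀ x : X, (T ^ m) (A x) = A ((S ^ m) x) := by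
    intro m
    induction m with
    | zero => intro x; simp
    | succ k ih =>
      intro x
      rw [pow_succ, pow_succ, Module.End.mul_apply, Module.End.mul_apply, comm, ih]
  -- injectivity
  have inj : ∀ x : X, (S ^ n) x = 0 → A x = 0 → x = 0 := by
    intro x hx hAx
    have key : ∀ k : ℕ, (S ^ k) x = (-l) ^ k • x := by
      intro k
      induction k with
      | zero => simp
      | succ m ih =>
        have hSx : S x = (-l) • x := by
          rw [hSapp, hAx, map_zero, zero_sub, neg_smul]
        rw [pow_succ, Module.End.mul_apply, hSx, map_smul, ih, smul_smul,
          ← pow_succ']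
    have h0 : (-l) ^ n • x = 0 := by rw [← key n, hx]
    rcases smul_eq_zero.mp h0 with h | h
    · exact absurd h (pow_ne_zero n (neg_ne_zero.mpr hl))
    · exact h
  -- surjectivity
  have surj : ∀ m : ℕ, ∀ y : Y, (T ^ m) y = 0 → ∃ x : X, (S ^ m) x = 0 ∧ A x = y := by
    intro m
    induction m with
    | zero =>
      intro y hy
      refine ⟨0, by simp, ?_⟩
      simp only [pow_zero, Module.End.one_apply] at hy
      simp [hy]
    | succ k ih =>
      intro y hy
      have hTy : (T ^ k) (T y) = 0 := by
        rw [pow_succ, Module.End.mul_apply] at hy; exact hy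
      obtain ⟨x', hx', hAx'⟩ := ih (T y) hTy
      refine ⟨l⁻¹ • (B y - x'), ?_, ?_⟩
      · have hAz : A (l⁻¹ • (B y - x')) = y := by
          rw [map_smul, map_sub, hAx', hTapp]
          rw [sub_sub_cancel, smul_smul, inv_mul_cancel₀ hl, one_smul]
        have hSz : S (l⁻¹ • (B y - x')) = x' := by
          rw [hSapp, hAz, smul_smul, mul_inv_cancel₀ hl, one_smul, sub_sub_cancel]
        rw [pow_succ, Module.End.mul_apply, hSz, hx']
      · rw [map_smul, map_sub, hAx', hTapp]
        rw [sub_sub_cancel, smul_smul, inv_mul_cancel₀ hl, one_smul]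
  refine ⟨⟨?_, ?_, ?_⟩, ?_, ?_⟩
  · intro x hx
    have hx' : (S ^ n) x = 0 := by simpa using hx
    have : (T ^ n) (A x) = 0 := by rw [commn, hx', map_zero]
    simpa using this
  · intro x1 h1 x2 h2 heq
    have h1' : (S ^ n) x1 = 0 := by simpa using h1
    have h2' : (S ^ n) x2 = 0 := by simpa using h2
    have hsub : (S ^ n) (x1 - x2) = 0 := by rw [map_sub, h1', h2', sub_zero]
    have hAsub : A (x1 - x2) = 0 := by rw [map_sub, heq, sub_self]
    have := inj _ hsub hAsub
    exact sub_eq_zero.mp this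
  · intro y hy
    have hy' : (T ^ n) y = 0 := by simpa using hy
    obtain ⟨x, hx, hAx⟩ := surj n y hy'
    exact ⟨x, by simpa using hx, hAx⟩
  · intro y hy
    have hTy : T y = 0 := by simpa using hy
    have : A (B y) = l • y := by
      have h := hTapp y; rw [hTy] at h
      exact (sub_eq_zero.mp h.symm)
    rw [map_smul, this, smul_smul, inv_mul_cancel₀ hl, one_smul]
  · intro x hx
    have hSx : S x = 0 := by simpa using hx
    have : B (A x) = l • x := by
      have h := hSapp x; rw [hSx] at h
      exact (sub_eq_zero.mp h.symm)
    rw [this, smul_smul, inv_mul_cancel₀ hl, one_smul]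
end

section
/- Let B : Y → X and A be linear operators such that B is closed, A is defined on a subspace of X containing ran(B restricted to dom(AB)), and the composition AB is closed (as an operator in Y). Then there exists a constant c > 0 such that ‖Bx‖ ≤ c(‖ABx‖ + ‖x‖) for all x ∈ dom(AB). -/
/-- The composition `A ∘ B` of partially defined linear operators, with its natural
domain `dom (AB) = {x ∈ dom B : Bx ∈ dom A}`. -/
noncomputable def LinearPMap.pcomp {𝕜 E F G : Type*} [Field 𝕜]
    [AddCommGroup E] [Module 𝕜 E] [AddCommGroup F] [Module 𝕜 F]
    [AddCommGroup G] [Module 𝕜 G] (A : F →ₗ.[𝕜] G) (B : E →ₗ.[𝕜] F) : E →ₗ.[𝕜] G where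
  domain := (A.domain.comap B.toFun).map B.domain.subtype
  toFun := A.toFun ∘ₗ (B.toFun.restrict (q := A.domain) (fun _ hx => hx)) ∘ₗ
    (Submodule.equivMapOfInjective B.domain.subtype (Submodule.injective_subtype _)
      (A.domain.comap B.toFun)).symm.toLinearMap

section Aux

variable {𝕜 E F G : Type*} [Field 𝕜]
    [AddCommGroup E] [Module 𝕜 E] [AddCommGroup F] [Module 𝕜 F]
    [AddCommGroup G] [Module 𝕜 G] (A : F →ₗ.[𝕜] G) (B : E →ₗ.[𝕜] F)

theorem pcomp_domain_mem (x : B.domain) (hx : B x ∈ A.domain) :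
    (x : E) ∈ (A.pcomp B).domain :=
  ⟨x, hx, rfl⟩

theorem mem_of_pcomp_domain {y : E} (hy : y ∈ (A.pcomp B).domain) :
    ∃ h : y ∈ B.domain, B ⟨y, h⟩ ∈ A.domain := by
  obtain ⟨c, hc, hcc⟩ := hy
  refine ⟨hcc ▸ c.2, ?_⟩
  have : (⟨y, hcc ▸ c.2⟩ : B.domain) = c := Subtype.ext hcc.symm
  rw [this]
  exact hc

theorem pcomp_apply (x : B.domain) (hx : B x ∈ A.domain)
    (hm : (x : E) ∈ (A.pcomp B).domain) :
    A.pcomp B ⟨x, hm⟩ = A ⟨B x, hx⟩ := by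
  set eqm := Submodule.equivMapOfInjective B.domain.subtype (Submodule.injective_subtype _)
    (A.domain.comap B.toFun) with heqm
  have hsymm : eqm.symm ⟨(x : E), hm⟩ = ⟨x, hx⟩ := by
    rw [LinearEquiv.symm_apply_eq]
    exact Subtype.ext rfl
  show A.toFun ((B.toFun.restrict (q := A.domain) (fun _ hx => hx))
      (eqm.symm ⟨(x : E), hm⟩)) = A ⟨B x, hx⟩
  rw [hsymm]
  rfl

end Aux

/-- If `B` is closed and the composition `AB` (with its natural domain)
is closed, then there is `c > 0` with `‖Bx‖ ≤ c(‖ABx‖ + ‖x‖)` for all `x ∈ dom (AB)`. -/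
theorem stmt2 {X Y : Type*} [NormedAddCommGroup X] [NormedSpace ℂ X] [CompleteSpace X]
    [NormedAddCommGroup Y] [NormedSpace ℂ Y] [CompleteSpace Y]
    (A : X →ₗ.[ℂ] Y) (B : Y →ₗ.[ℂ] X)
    (hAdense : Dense (A.domain : Set X)) (hBdense : Dense (B.domain : Set Y))
    (hA : A.IsClosed) (hB : B.IsClosed) (hAB : (A.pcomp B).IsClosed) :
    ∃ c > (0 : ℝ), ∀ (x : B.domain) (hx : B x ∈ A.domain),
      ‖B x‖ ≤ c * (‖A ⟨B x, hx⟩‖ + ‖(x : Y)‖) := by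
  classical
  set f := A.pcomp B with hfdef
  set D := f.domain with hD
  set C := A.domain.comap B.toFun with hC
  set G := f.graph with hG
  haveI : CompleteSpace G := by
    have : IsClosed ((G : Set (Y × Y))) := hAB
    exact this.completeSpace_coe
  -- the linear equivalence between the domain and the graph
  set S : D →ₗ[ℂ] Y × Y := (D.subtype).prod f.toFun with hS
  have hSapp : ∀ d : D, S d = ((d : Y), f d) := fun d => rfl
  have hSinj : Function.Injective S := by
    intro a b h
    exact Subtype.ext (congrArg Prod.fst h)
  have hSrange : LinearMap.range S = G := by
    ext z
    simp only [LinearMap.mem_range, hG, LinearPMap.mem_graph_iff']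
    constructor
    · rintro ⟨y, hy⟩; exact ⟨y, hy⟩
    · rintro ⟨y, hy⟩; exact ⟨y, hy⟩
  set e : D ≃ₗ[ℂ] G := (LinearEquiv.ofInjective S hSinj).trans
    (LinearEquiv.ofEq _ _ hSrange) with he
  have heapp : ∀ d : D, ((e d : Y × Y)) = ((d : Y), f d) := fun d => rfl
  -- the map g ↦ B g.1 on the graph
  set eqm := Submodule.equivMapOfInjective B.domain.subtype (Submodule.injective_subtype _) C
    with heqm
  set Bmap : D →ₗ[ℂ] X := B.toFun ∘ₗ C.subtype ∘ₗ eqm.symm.toLinearMap with hBmapdef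
  have hBmap : ∀ (d : D) (h : (d : Y) ∈ B.domain), Bmap d = B ⟨(d : Y), h⟩ := by
    intro d h
    have h1 : ((C.subtype (eqm.symm d) : B.domain) : Y) = (d : Y) :=
      Submodule.map_equivMapOfInjective_symm_apply B.domain.subtype
        (Submodule.injective_subtype _) C d
    show B.toFun (C.subtype (eqm.symm d)) = B ⟨(d : Y), h⟩
    exact congrArg B.toFun (Subtype.ext h1)
  set T : G →ₗ[ℂ] X := Bmap ∘ₗ (e.symm : G →ₗ[ℂ] D) with hTdef
  have hGmemD : ∀ g : G, ((g : Y × Y)).1 ∈ D := by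
    intro g
    obtain ⟨y, hy⟩ := f.mem_graph_iff'.mp g.2
    have : ((g : Y × Y)).1 = (y : Y) := by rw [← hy]
    rw [this]; exact y.2
  have hGB : ∀ g : G, ((g : Y × Y)).1 ∈ B.domain :=
    fun g => (mem_of_pcomp_domain A B (hGmemD g)).1
  have hT : ∀ (g : G) (h : ((g : Y × Y)).1 ∈ B.domain), T g = B ⟨((g : Y × Y)).1, h⟩ := by
    intro g h
    have hd : ((e.symm g : D) : Y) = ((g : Y × Y)).1 := by
      have := heapp (e.symm g)
      rw [e.apply_symm_apply] at this
      exact (congrArg Prod.fst this).symm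
    show Bmap (e.symm g) = B ⟨((g : Y × Y)).1, h⟩
    rw [hBmap (e.symm g) (hd ▸ h)]
    exact congrArg _ (Subtype.ext hd)
  -- T has closed graph
  have hTclosed : IsClosed (T.graph : Set (G × X)) := by
    have key : (T.graph : Set (G × X)) =
        (fun p : G × X => (((p.1 : Y × Y)).1, p.2)) ⁻¹' (B.graph : Set (Y × X)) := by
      ext p
      simp only [Set.mem_preimage, SetLike.mem_coe, LinearMap.mem_graph_iff,
        LinearPMap.mem_graph_iff]
      constructor
      · intro h2
        refine ⟨⟨_, hGB p.1⟩, rfl, ?_⟩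
        rw [h2, hT p.1 (hGB p.1)]
      · rintro ⟨y, hy1, hy2⟩
        rw [← hy2, hT p.1 (hGB p.1)]
        exact congrArg _ (Subtype.ext hy1)
    rw [key]
    have hcont : Continuous (fun p : G × X => (((p.1 : Y × Y)).1, p.2)) := by
      exact ((continuous_subtype_val.comp continuous_fst).fst).prodMk continuous_snd
    exact hB.preimage hcont
  set T' : G →L[ℂ] X := ⟨T, T.continuous_of_isClosed_graph hTclosed⟩ with hT'
  have hTn : (0 : ℝ) ≤ ‖T'‖ := T'.opNorm_nonneg
  refine ⟨‖T'‖ + 1, by linarith, ?_⟩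
  intro x hx
  have hm : (x : Y) ∈ D := pcomp_domain_mem A B x hx
  set d : D := ⟨(x : Y), hm⟩ with hd
  set g : G := ⟨((x : Y), f d), f.mem_graph d⟩ with hg
  have h1 : T g = B x := by
    have : T g = B ⟨((g : Y × Y)).1, hGB g⟩ := hT g (hGB g)
    rw [this]
  have h2 : f d = A ⟨B x, hx⟩ := pcomp_apply A B x hx hm
  have hnormg : ‖g‖ ≤ ‖A ⟨B x, hx⟩‖ + ‖(x : Y)‖ := by
    have hn : ‖g‖ = max ‖(x : Y)‖ ‖f d‖ := by
      show ‖(g : Y × Y)‖ = _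
      rw [show ((g : Y × Y)) = ((x : Y), f d) from rfl, Prod.norm_def]
    rw [hn, h2]
    exact max_le (le_add_of_nonneg_left (norm_nonneg _))
      (le_add_of_nonneg_right (norm_nonneg _))
  calc ‖B x‖ = ‖T' g‖ := by rw [show T' g = T g from rfl, h1]
    _ ≤ ‖T'‖ * ‖g‖ := T'.le_opNorm g
    _ ≤ ‖T'‖ * (‖A ⟨B x, hx⟩‖ + ‖(x : Y)‖) :=
        mul_le_mul_of_nonneg_left hnormg hTn
    _ ≤ (‖T'‖ + 1) * (‖A ⟨B x, hx⟩‖ + ‖(x : Y)‖) := by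
        exact mul_le_mul_of_nonneg_right (by linarith) (by positivity)
end

section
/- Let A and B be closed densely defined operators between Banach spaces X and Y (A : dom A ⊂ X → Y, B : dom B ⊂ Y → X) such that ρ(AB) and ρ(BA) are both nonempty. If λ ∈ ρ(AB) with λ ≠ 0, then λ ∈ ρ(BA); hence σ(AB)∖{0} = σ(BA)∖{0}. -/
/-- The resolvent set of a partially defined operator `T` in a Banach space: those
`λ` for which `T - λ : dom T → E` is bijective with bounded inverse. -/
def pResolventSet {E : Type*} [NormedAddCommGroup E] [NormedSpace ℂ E]
    (T : E →ₗ.[ℂ] E) : Set ℂ :=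
  {l | Function.Bijective (fun x : T.domain => T x - l • (x : E)) ∧
       ∃ C > (0 : ℝ), ∀ x : T.domain, ‖(x : E)‖ ≤ C * ‖T x - l • (x : E)‖}

/-!
For `λ ≠ 0` the algebra is that of `1 - ab` versus `1 - ba`: if `BAx = λx` then `Ax` is an
eigenvector of `AB`, so `BA - λ` is injective; and if `(AB - λ)u = Ay` with `y ∈ dom A`, then
`x = λ⁻¹(Bu - y)` solves `(BA - λ)x = y`. Shifting by a point `μ ∈ ρ(BA)` extends this
surjectivity from `dom A` to all of `X`. The same point `μ` makes `BA` closed, so the closed graph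
theorem bounds `(BA - λ)⁻¹`. Exchanging `A` and `B` gives the equality of the punctured spectra.
-/

namespace LinearPMap

section pcomp

variable {𝕜 E F G : Type*} [Field 𝕜] [AddCommGroup E] [Module 𝕜 E] [AddCommGroup F] [Module 𝕜 F]
  [AddCommGroup G] [Module 𝕜 G] {A : F →ₗ.[𝕜] G} {B : E →ₗ.[𝕜] F}

theorem mk_mem_graph_iff {x : F} {z : G} :
    (x, z) ∈ A.graph ↔ ∃ hx : x ∈ A.domain, A ⟨x, hx⟩ = z :=
  ⟨fun h => by obtain ⟨⟨y, hy⟩, rfl, rfl⟩ := A.mem_graph_iff.1 h; exact ⟨hy, rfl⟩,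
    fun ⟨hx, hz⟩ => A.mem_graph_iff.2 ⟨⟨x, hx⟩, rfl, hz⟩⟩

theorem mem_pcomp_domain_iff {x : E} :
    x ∈ (A.pcomp B).domain ↔ ∃ h : x ∈ B.domain, B ⟨x, h⟩ ∈ A.domain :=
  ⟨fun ⟨b, hb, hx⟩ => hx ▸ ⟨b.2, hb⟩, fun ⟨h, hA⟩ => ⟨⟨x, h⟩, hA, rfl⟩⟩

theorem pcomp_domain_le : (A.pcomp B).domain ≤ B.domain :=
  fun _ hx => (mem_pcomp_domain_iff.1 hx).1

theorem pcomp_apply (x : (A.pcomp B).domain) (hB : (x : E) ∈ B.domain)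
    (hA : B ⟨x, hB⟩ ∈ A.domain) : A.pcomp B x = A ⟨B ⟨x, hB⟩, hA⟩ := by
  set e := Submodule.equivMapOfInjective B.domain.subtype (Submodule.injective_subtype _)
    (A.domain.comap B.toFun)
  have : e.symm x = ⟨⟨x, hB⟩, hA⟩ := e.symm_apply_eq.2 (Subtype.ext rfl)
  change A.toFun (B.toFun.restrict (q := A.domain) (fun _ hx => hx) (e.symm x)) = _
  rw [this]
  rfl

end pcomp

section subSMul

variable {𝕜 E : Type*} [Field 𝕜] [AddCommGroup E] [Module 𝕜 E]

def subSMul (T : E →ₗ.[𝕜] E) (l : 𝕜) : T.domain →ₗ[𝕜] E :=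
  T.toFun - l • T.domain.subtype

@[simp]
theorem subSMul_apply (T : E →ₗ.[𝕜] E) (l : 𝕜) (x : T.domain) :
    T.subSMul l x = T x - l • (x : E) :=
  rfl

/-- `(T - λ) z = (T - μ) z - (λ - μ) z`, and `(λ - μ) z ∈ dom T` is in the range of `T - λ`. -/
theorem surjective_subSMul_of_domain_le_range {T : E →ₗ.[𝕜] E} {l μ : 𝕜}
    (hμ : Function.Surjective (T.subSMul μ)) (hl : T.domain ≤ LinearMap.range (T.subSMul l)) :
    Function.Surjective (T.subSMul l) := by
  intro y
  obtain ⟨z, hz⟩ := hμ y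
  obtain ⟨w, hw⟩ := hl (T.domain.smul_mem (l - μ) z.2)
  refine ⟨z + w, ?_⟩
  calc T.subSMul l (z + w) = T.subSMul μ z + T.subSMul l w - (l - μ) • (z : E) := by
        simp only [subSMul_apply, map_add, Submodule.coe_add, smul_add, sub_smul]; abel
    _ = y := by rw [hz, hw, add_sub_cancel_right]

end subSMul

section swap

variable {𝕜 E F : Type*} [Field 𝕜] [AddCommGroup E] [Module 𝕜 E] [AddCommGroup F] [Module 𝕜 F]
  {A : E →ₗ.[𝕜] F} {B : F →ₗ.[𝕜] E} {l : 𝕜}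

theorem injective_subSMul_pcomp_swap (hl : l ≠ 0)
    (h : Function.Injective ((A.pcomp B).subSMul l)) :
    Function.Injective ((B.pcomp A).subSMul l) := by
  rw [← LinearMap.ker_eq_bot, LinearMap.ker_eq_bot'] at h ⊢
  intro x hx
  obtain ⟨hxA, hAx⟩ := mem_pcomp_domain_iff.1 x.2
  have hBAx : B ⟨A ⟨x, hxA⟩, hAx⟩ = l • (x : E) := by
    rw [← pcomp_apply x hxA hAx]
    exact sub_eq_zero.1 hx
  have hBAxA : B ⟨A ⟨x, hxA⟩, hAx⟩ ∈ A.domain := hBAx ▸ A.domain.smul_mem l hxA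
  have hv : (A ⟨x, hxA⟩ : F) ∈ (A.pcomp B).domain := mem_pcomp_domain_iff.2 ⟨hAx, hBAxA⟩
  have hSv : (A.pcomp B).subSMul l ⟨_, hv⟩ = 0 := by
    rw [subSMul_apply, pcomp_apply _ hAx hBAxA, sub_eq_zero,
      show (⟨_, hBAxA⟩ : A.domain) = l • ⟨x, hxA⟩ from Subtype.ext hBAx, map_smul]
  have hAx0 : A ⟨x, hxA⟩ = 0 := congrArg Subtype.val (h _ hSv)
  have : l • (x : E) = 0 := by
    rw [← hBAx, show (⟨A ⟨x, hxA⟩, hAx⟩ : B.domain) = 0 from Subtype.ext hAx0, map_zero]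
  exact Subtype.ext ((smul_eq_zero_iff_right hl).1 this)

theorem domain_le_range_subSMul_pcomp_swap (hl : l ≠ 0)
    (h : Function.Surjective ((A.pcomp B).subSMul l)) :
    A.domain ≤ LinearMap.range ((B.pcomp A).subSMul l) := by
  intro y hy
  obtain ⟨u, hu⟩ := h (A ⟨y, hy⟩)
  obtain ⟨huB, hBu⟩ := mem_pcomp_domain_iff.1 u.2
  have hSu : A ⟨B ⟨u, huB⟩, hBu⟩ - l • (u : F) = A ⟨y, hy⟩ := by
    rw [← pcomp_apply u huB hBu]; exact hu
  set x : A.domain := l⁻¹ • (⟨B ⟨u, huB⟩, hBu⟩ - ⟨y, hy⟩)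
  have hAx : A x = u := by
    rw [map_smul, map_sub, ← hSu, sub_sub_cancel, smul_smul, inv_mul_cancel₀ hl, one_smul]
  have hx : (x : E) ∈ (B.pcomp A).domain := mem_pcomp_domain_iff.2 ⟨x.2, hAx ▸ huB⟩
  refine ⟨⟨x, hx⟩, ?_⟩
  rw [subSMul_apply, pcomp_apply _ x.2 (hAx ▸ huB),
    show (⟨A x, hAx ▸ huB⟩ : B.domain) = ⟨u, huB⟩ from Subtype.ext hAx]
  simp only [x, Submodule.coe_smul, Submodule.coe_sub, smul_smul, mul_inv_cancel₀ hl, one_smul,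
    sub_sub_cancel]

end swap

section resolvent

variable {𝕜 E : Type*} [Field 𝕜] [AddCommGroup E] [Module 𝕜 E] {T : E →ₗ.[𝕜] E} {l : 𝕜}

noncomputable def resolvent (h : Function.Bijective (T.subSMul l)) : E →ₗ[𝕜] E :=
  T.domain.subtype ∘ₗ (LinearEquiv.ofBijective _ h).symm.toLinearMap

theorem resolvent_apply_eq_iff (h : Function.Bijective (T.subSMul l)) {x y : E} :
    resolvent h y = x ↔ ∃ hx : x ∈ T.domain, T.subSMul l ⟨x, hx⟩ = y := by
  constructor
  · rintro rfl
    exact ⟨_, (LinearEquiv.ofBijective _ h).apply_symm_apply y⟩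
  · rintro ⟨hx, rfl⟩
    exact congrArg Subtype.val ((LinearEquiv.ofBijective _ h).symm_apply_apply ⟨x, hx⟩)

theorem resolvent_subSMul (h : Function.Bijective (T.subSMul l)) (x : T.domain) :
    resolvent h (T.subSMul l x) = x :=
  (resolvent_apply_eq_iff h).2 ⟨x.2, rfl⟩

end resolvent

section normed

variable {E : Type*} [NormedAddCommGroup E] [NormedSpace ℂ E] {T : E →ₗ.[ℂ] E} {l : ℂ}

theorem mem_pResolventSet_iff : l ∈ pResolventSet T ↔ Function.Bijective (T.subSMul l) ∧
    ∃ C > (0 : ℝ), ∀ x : T.domain, ‖(x : E)‖ ≤ C * ‖T.subSMul l x‖ :=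
  Iff.rfl

theorem isClosed_of_mem_pResolventSet (hl : l ∈ pResolventSet T) : T.IsClosed := by
  obtain ⟨h, C, -, hC⟩ := mem_pResolventSet_iff.1 hl
  have hR : Continuous (resolvent h) := by
    refine AddMonoidHomClass.continuous_of_bound (resolvent h) C fun y => ?_
    obtain ⟨x, rfl⟩ := h.2 y
    rw [resolvent_subSMul]
    exact hC x
  have hgraph : (T.graph : Set (E × E)) = {p | resolvent h (p.2 - l • p.1) = p.1} := by
    ext ⟨x, z⟩
    simp only [SetLike.mem_coe, mk_mem_graph_iff, Set.mem_ofPred_eq, resolvent_apply_eq_iff,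
      subSMul_apply, sub_left_inj]
  rw [IsClosed, hgraph]
  exact isClosed_eq (hR.comp (continuous_snd.sub (continuous_fst.const_smul l))) continuous_fst

theorem mem_pResolventSet_of_isClosed [CompleteSpace E] (hT : T.IsClosed)
    (h : Function.Bijective (T.subSMul l)) : l ∈ pResolventSet T := by
  have hgraph : ((resolvent h).graph : Set (E × E)) =
      (fun p : E × E => (p.2, p.1 + l • p.2)) ⁻¹' T.graph := by
    ext ⟨y, x⟩
    simp only [SetLike.mem_coe, LinearMap.mem_graph_iff, Set.mem_preimage, mk_mem_graph_iff,
      eq_comm (a := x), resolvent_apply_eq_iff, subSMul_apply, sub_eq_iff_eq_add]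
  have hR : Continuous (resolvent h) := (resolvent h).continuous_of_isClosed_graph <| by
    rw [hgraph]
    exact hT.preimage (continuous_snd.prodMk (continuous_fst.add (continuous_snd.const_smul l)))
  obtain ⟨C, hC0, hC⟩ := SemilinearMapClass.bound_of_continuous _ hR
  refine ⟨h, C, hC0, fun x => ?_⟩
  have := hC (T.subSMul l x)
  rwa [resolvent_subSMul] at this

end normed

variable {X Y : Type*} [NormedAddCommGroup X] [NormedSpace ℂ X] [NormedAddCommGroup Y]
  [NormedSpace ℂ Y] {A : X →ₗ.[ℂ] Y} {B : Y →ₗ.[ℂ] X} {l : ℂ}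

/-- A point of `ρ(BA)` makes `BA` closed, which is what lets the closed graph theorem bound
`(BA - λ)⁻¹` once it is known to exist. -/
theorem mem_pResolventSet_pcomp_swap [CompleteSpace X] (hl : l ≠ 0)
    (hρ : (pResolventSet (B.pcomp A)).Nonempty) (hlAB : l ∈ pResolventSet (A.pcomp B)) :
    l ∈ pResolventSet (B.pcomp A) := by
  obtain ⟨μ, hμ⟩ := hρ
  have hS := (mem_pResolventSet_iff.1 hlAB).1
  refine mem_pResolventSet_of_isClosed (isClosed_of_mem_pResolventSet hμ)
    ⟨injective_subSMul_pcomp_swap hl hS.1, ?_⟩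
  exact surjective_subSMul_of_domain_le_range (mem_pResolventSet_iff.1 hμ).1.2
    (pcomp_domain_le.trans (domain_le_range_subSMul_pcomp_swap hl hS.2))

end LinearPMap

theorem stmt4_general {X Y : Type*} [NormedAddCommGroup X] [NormedSpace ℂ X] [CompleteSpace X]
    [NormedAddCommGroup Y] [NormedSpace ℂ Y] [CompleteSpace Y]
    (A : X →ₗ.[ℂ] Y) (B : Y →ₗ.[ℂ] X)
    (hρAB : (pResolventSet (A.pcomp B)).Nonempty)
    (hρBA : (pResolventSet (B.pcomp A)).Nonempty)
    (l : ℂ) (hl : l ≠ 0) (hlAB : l ∈ pResolventSet (A.pcomp B)) :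
    l ∈ pResolventSet (B.pcomp A) ∧
    {μ : ℂ | μ ∉ pResolventSet (A.pcomp B)} \ {0} =
      {μ : ℂ | μ ∉ pResolventSet (B.pcomp A)} \ {0} := by
  refine ⟨LinearPMap.mem_pResolventSet_pcomp_swap hl hρBA hlAB, ?_⟩
  ext μ
  simp only [Set.mem_sdiff, Set.mem_ofPred_eq, Set.mem_singleton_iff, and_congr_left_iff]
  intro hμ
  exact not_congr ⟨LinearPMap.mem_pResolventSet_pcomp_swap hμ hρBA,
    LinearPMap.mem_pResolventSet_pcomp_swap hμ hρAB⟩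

/-- For closed densely defined operators `A : dom A ⊂ X → Y` and
`B : dom B ⊂ Y → X` with both `ρ(AB)` and `ρ(BA)` nonempty, any nonzero `λ ∈ ρ(AB)`
also belongs to `ρ(BA)`; hence `σ(AB) \ {0} = σ(BA) \ {0}`. -/
theorem stmt4 {X Y : Type*} [NormedAddCommGroup X] [NormedSpace ℂ X] [CompleteSpace X]
    [NormedAddCommGroup Y] [NormedSpace ℂ Y] [CompleteSpace Y]
    (A : X →ₗ.[ℂ] Y) (B : Y →ₗ.[ℂ] X)
    (hAdense : Dense (A.domain : Set X)) (hBdense : Dense (B.domain : Set Y))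
    (hA : A.IsClosed) (hB : B.IsClosed)
    (hρAB : (pResolventSet (A.pcomp B)).Nonempty)
    (hρBA : (pResolventSet (B.pcomp A)).Nonempty)
    (l : ℂ) (hl : l ≠ 0) (hlAB : l ∈ pResolventSet (A.pcomp B)) :
    l ∈ pResolventSet (B.pcomp A) ∧
    {μ : ℂ | μ ∉ pResolventSet (A.pcomp B)} \ {0} =
      {μ : ℂ | μ ∉ pResolventSet (B.pcomp A)} \ {0} :=
  stmt4_general A B hρAB hρBA l hl hlAB
end

section
/- Let A : X → Y and B : Y → X be bounded operators, λ ∈ ρ(AB)∖{0}, and μ ∈ ρ(BA). Then (BA − λ)^{-1} = λ^{-1}(μ·I + (λ − μ)·B(AB − λ)^{-1}A)(BA − μ)^{-1}. -/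
open ContinuousLinearMap

/-!
With `N := B (AB - λ)⁻¹ A`, applying `B` to `(AB - λ)(AB - λ)⁻¹ = 1` at `A x` gives
`(BA - λ) N = N (BA - λ) = BA`, so `λ⁻¹ (N - 1)` is a two-sided inverse of `BA - λ`
(Jacobson's lemma). The same relation gives `μ + (λ - μ) N = (N - 1)(BA - μ)`, and the
factor `BA - μ` cancels against `(BA - μ)⁻¹`.
-/

theorem isUnit_sub_smul_one_of_mem_resolventSet {R A : Type*} [CommRing R] [Ring A]
    [Algebra R A] {a : A} {r : R} (h : r ∈ resolventSet R a) : IsUnit (a - r • 1) := by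
  rw [spectrum.mem_resolventSet_iff, Algebra.algebraMap_eq_smul_one] at h
  exact IsUnit.sub_iff.mp h

section Algebra

variable {𝕜 R : Type*} [Field 𝕜] [Ring R] [Algebra 𝕜 R] {T N : R} {l : 𝕜}

theorem Ring.inverse_sub_smul_one_eq (hl : l ≠ 0) (hleft : N * (T - l • 1) = T)
    (hright : (T - l • 1) * N = T) : Ring.inverse (T - l • 1) = l⁻¹ • (N - 1) := by
  refine Ring.inverse_unit ⟨_, _, ?_, ?_⟩
  · rw [mul_smul_comm, mul_sub, hright, mul_one, sub_sub_cancel, smul_smul,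
      inv_mul_cancel₀ hl, one_smul]
  · rw [smul_mul_assoc, sub_mul, hleft, one_mul, sub_sub_cancel, smul_smul,
      inv_mul_cancel₀ hl, one_smul]

theorem smul_one_add_smul_eq_sub_one_mul (μ : 𝕜) (h : N * (T - l • 1) = T) :
    μ • 1 + (l - μ) • N = (N - 1) * (T - μ • 1) := by
  rw [mul_sub, mul_smul_comm, mul_one, sub_eq_iff_eq_add] at h
  rw [sub_mul, mul_sub, mul_sub, mul_smul_comm, mul_one, one_mul, one_mul, h]
  module

end Algebra

section Jacobson

variable {𝕜 X Y : Type*} [NormedField 𝕜] [NormedAddCommGroup X] [NormedSpace 𝕜 X]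
  [NormedAddCommGroup Y] [NormedSpace 𝕜 Y] {A : X →L[𝕜] Y} {B : Y →L[𝕜] X} {l : 𝕜}
  {s : Y →L[𝕜] Y}

theorem sub_smul_one_comp_sandwich (hs : (A ∘L B - l • 1) ∘L s = 1) :
    (B ∘L A - l • 1) ∘L ((B ∘L s) ∘L A) = B ∘L A := by
  ext x
  simpa using congr(B ($hs (A x)))

theorem sandwich_comp_sub_smul_one (hs : s ∘L (A ∘L B - l • 1) = 1) :
    ((B ∘L s) ∘L A) ∘L (B ∘L A - l • 1) = B ∘L A := by
  ext x
  simpa using congr(B ($hs (A x)))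

theorem sandwich_inverse_comp_sub_smul_one (h : IsUnit (A ∘L B - l • 1)) :
    ((B ∘L Ring.inverse (A ∘L B - l • 1)) ∘L A) ∘L (B ∘L A - l • 1) = B ∘L A :=
  sandwich_comp_sub_smul_one (Ring.inverse_mul_cancel _ h)

theorem inverse_comp_sub_smul_one (hl : l ≠ 0) (h : IsUnit (A ∘L B - l • 1)) :
    Ring.inverse (B ∘L A - l • 1) =
      l⁻¹ • ((B ∘L Ring.inverse (A ∘L B - l • 1)) ∘L A - 1) :=
  Ring.inverse_sub_smul_one_eq hl (sandwich_inverse_comp_sub_smul_one h)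
    (sub_smul_one_comp_sandwich (Ring.mul_inverse_cancel _ h))

end Jacobson

theorem stmt5_general {X Y : Type*} [NormedAddCommGroup X] [NormedSpace ℂ X]
    [NormedAddCommGroup Y] [NormedSpace ℂ Y]
    (A : X →L[ℂ] Y) (B : Y →L[ℂ] X) (l μ : ℂ) (hl : l ≠ 0)
    (hlr : l ∈ resolventSet ℂ (A.comp B)) (hμ : μ ∈ resolventSet ℂ (B.comp A)) :
    Ring.inverse (B.comp A - l • (1 : X →L[ℂ] X)) =
      l⁻¹ • ((μ • (1 : X →L[ℂ] X) +
          (l - μ) • ((B.comp (Ring.inverse (A.comp B - l • (1 : Y →L[ℂ] Y)))).comp A)).comp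
        (Ring.inverse (B.comp A - μ • (1 : X →L[ℂ] X)))) := by
  have hAB := isUnit_sub_smul_one_of_mem_resolventSet hlr
  have hBA := isUnit_sub_smul_one_of_mem_resolventSet hμ
  have factor := smul_one_add_smul_eq_sub_one_mul μ (sandwich_inverse_comp_sub_smul_one hAB)
  rw [inverse_comp_sub_smul_one hl hAB, ← mul_def, factor, mul_assoc,
    Ring.mul_inverse_cancel _ hBA, mul_one]

/-- For bounded operators `A, B`, `λ ∈ ρ(AB) \ {0}` and `μ ∈ ρ(BA)`,
`(BA - λ)⁻¹ = λ⁻¹ (μ I + (λ - μ) B (AB - λ)⁻¹ A)(BA - μ)⁻¹`. -/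
theorem stmt5 {X Y : Type*} [NormedAddCommGroup X] [NormedSpace ℂ X] [CompleteSpace X]
    [NormedAddCommGroup Y] [NormedSpace ℂ Y] [CompleteSpace Y]
    (A : X →L[ℂ] Y) (B : Y →L[ℂ] X) (l μ : ℂ) (hl : l ≠ 0)
    (hlr : l ∈ resolventSet ℂ (A.comp B)) (hμ : μ ∈ resolventSet ℂ (B.comp A)) :
    Ring.inverse (B.comp A - l • (1 : X →L[ℂ] X)) =
      l⁻¹ • ((μ • (1 : X →L[ℂ] X) +
          (l - μ) • ((B.comp (Ring.inverse (A.comp B - l • (1 : Y →L[ℂ] Y)))).comp A)).comp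
        (Ring.inverse (B.comp A - μ • (1 : X →L[ℂ] X)))) :=
  stmt5_general A B l μ hl hlr hμ
end

section
/- Let A : X → Y and B : Y → X be bounded linear operators between Banach spaces and let λ be a nonzero complex number. Then the range of AB − λ is closed in Y if and only if the range of BA − λ is closed in X. -/
lemma stmt6_aux {X Y : Type*} [NormedAddCommGroup X] [NormedSpace ℂ X]
    [NormedAddCommGroup Y] [NormedSpace ℂ Y]
    (A : X →L[ℂ] Y) (B : Y →L[ℂ] X) (l : ℂ) (hl : l ≠ 0) :
    Set.range (A.comp B - l • (1 : Y →L[ℂ] Y)) =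
      B ⁻¹' Set.range (B.comp A - l • (1 : X →L[ℂ] X)) := by
  ext y
  constructor
  · rintro ⟨x, rfl⟩
    exact ⟨B x, by simp [map_sub, map_smul]⟩
  · rintro ⟨u, hu⟩
    simp only [ContinuousLinearMap.sub_apply, ContinuousLinearMap.smul_apply,
      ContinuousLinearMap.one_apply, ContinuousLinearMap.comp_apply] at hu
    refine ⟨l⁻¹ • (A u - y), ?_⟩
    have hb : B (A u) = B y + l • u := by rw [← hu]; abel
    have h3 : A (B (A u)) = A (B y) + l • A u := by rw [hb, map_add, map_smul]
    simp only [ContinuousLinearMap.sub_apply, ContinuousLinearMap.smul_apply,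
      ContinuousLinearMap.one_apply, ContinuousLinearMap.comp_apply, map_smul, map_sub, h3,
      add_sub_cancel_left, smul_smul, mul_inv_cancel₀ hl, inv_mul_cancel₀ hl, one_smul,
      smul_sub, sub_sub_cancel, smul_add, add_sub_cancel_left]
    abel

/-- For bounded operators and `λ ≠ 0`, `ran (AB - λ)` is closed iff
`ran (BA - λ)` is closed. -/
theorem stmt6 {X Y : Type*} [NormedAddCommGroup X] [NormedSpace ℂ X] [CompleteSpace X]
    [NormedAddCommGroup Y] [NormedSpace ℂ Y] [CompleteSpace Y]
    (A : X →L[ℂ] Y) (B : Y →L[ℂ] X) (l : ℂ) (hl : l ≠ 0) :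
    IsClosed (Set.range (A.comp B - l • (1 : Y →L[ℂ] Y))) ↔
      IsClosed (Set.range (B.comp A - l • (1 : X →L[ℂ] X))) := by
  constructor
  · intro h
    rw [stmt6_aux B A l hl]
    exact h.preimage A.continuous
  · intro h
    rw [stmt6_aux A B l hl]
    exact h.preimage B.continuous
end

section
/- Let A : X → Y and B : Y → X be bounded linear operators between Banach spaces and let λ be a nonzero complex number. Then the range of AB − λ is dense in Y if and only if the range of BA − λ is dense in X. -/
/-!
Since `(AB - λ) A = A (BA - λ)`, the map `A` sends the range of `BA - λ` into that of `AB - λ`, so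
by continuity and density `A X` lies in the closure of the range of `AB - λ`. As this closure is a
subspace and `y = λ⁻¹ (A (B y) - (AB - λ) y)`, it is everything.
-/

namespace ContinuousLinearMap

variable {𝕜 X Y : Type*} [Field 𝕜]
  [AddCommGroup X] [Module 𝕜 X] [TopologicalSpace X] [IsTopologicalAddGroup X]
  [ContinuousConstSMul 𝕜 X]
  [AddCommGroup Y] [Module 𝕜 Y] [TopologicalSpace Y] [IsTopologicalAddGroup Y]
  [ContinuousConstSMul 𝕜 Y]

theorem comp_sub_smul_one_comp (A : X →L[𝕜] Y) (B : Y →L[𝕜] X) (l : 𝕜) :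
    (A.comp B - l • (1 : Y →L[𝕜] Y)).comp A = A.comp (B.comp A - l • (1 : X →L[𝕜] X)) := by
  ext x
  simp

theorem denseRange_comp_sub_smul_one_of_denseRange (A : X →L[𝕜] Y) (B : Y →L[𝕜] X) {l : 𝕜}
    (hl : l ≠ 0) (h : DenseRange (B.comp A - l • (1 : X →L[𝕜] X))) :
    DenseRange (A.comp B - l • (1 : Y →L[𝕜] Y)) := by
  set T := A.comp B - l • (1 : Y →L[𝕜] Y)
  set R : Submodule 𝕜 Y := LinearMap.range (T : Y →ₗ[𝕜] Y)
  have hA : ∀ x, A x ∈ R.topologicalClosure := fun x =>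
    h.induction_on (p := fun x => A x ∈ R.topologicalClosure) x
      (R.isClosed_topologicalClosure.preimage A.continuous) fun x' =>
        R.le_topologicalClosure ⟨A x', DFunLike.congr_fun (comp_sub_smul_one_comp A B l) x'⟩
  have hS : R.topologicalClosure = ⊤ := by
    refine eq_top_iff.mpr fun y _ => ?_
    have hy : y = l⁻¹ • (A (B y) - T y) := by
      simp [T, smul_smul, inv_mul_cancel₀ hl]
    rw [hy]
    exact Submodule.smul_mem _ _ (Submodule.sub_mem _ (hA _) (R.le_topologicalClosure ⟨y, rfl⟩))
  rwa [DenseRange, ← coe_coe, ← LinearMap.coe_range, Submodule.dense_iff_topologicalClosure_eq_top]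

end ContinuousLinearMap

theorem stmt7_general {X Y : Type*} [NormedAddCommGroup X] [NormedSpace ℂ X]
    [NormedAddCommGroup Y] [NormedSpace ℂ Y]
    (A : X →L[ℂ] Y) (B : Y →L[ℂ] X) (l : ℂ) (hl : l ≠ 0) :
    Dense (Set.range (A.comp B - l • (1 : Y →L[ℂ] Y))) ↔
      Dense (Set.range (B.comp A - l • (1 : X →L[ℂ] X))) :=
  ⟨(B.denseRange_comp_sub_smul_one_of_denseRange A hl ·),
    (A.denseRange_comp_sub_smul_one_of_denseRange B hl ·)⟩

/-- For bounded operators and `λ ≠ 0`, `ran (AB - λ)` is dense in `Y` iff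
`ran (BA - λ)` is dense in `X`. -/
theorem stmt7 {X Y : Type*} [NormedAddCommGroup X] [NormedSpace ℂ X] [CompleteSpace X]
    [NormedAddCommGroup Y] [NormedSpace ℂ Y] [CompleteSpace Y]
    (A : X →L[ℂ] Y) (B : Y →L[ℂ] X) (l : ℂ) (hl : l ≠ 0) :
    Dense (Set.range (A.comp B - l • (1 : Y →L[ℂ] Y))) ↔
      Dense (Set.range (B.comp A - l • (1 : X →L[ℂ] X))) :=
  stmt7_general A B l hl
end

section
/- Let A : X → Y and B : Y → X be bounded operators between Banach spaces and let λ ≠ 0. Then AB − λ is upper semi-Fredholm (closed range and finite-dimensional kernel) if and only if BA − λ is upper semi-Fredholm. -/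
/-!
The intertwining relations `B (AB - λ) = (BA - λ) B` and `A (BA - λ) = (AB - λ) A` carry the
range and the kernel of one operator to those of the other. For the range, `λ ≠ 0` gives the
converse as well: if `B y = (BA - λ) x`, then `(AB - λ)(A x - y) = λ y`. Hence
`ran (AB - λ) = B⁻¹ (ran (BA - λ))`, a preimage of a closed set under a continuous map. For the
kernel, `BA x = λ x` shows that `A` is injective on `ker (BA - λ)`, and it maps that kernel into
`ker (AB - λ)`.
-/

namespace LinearMap

variable {K V W : Type*} [Field K] [AddCommGroup V] [Module K V] [AddCommGroup W] [Module K W]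
  (A : V →ₗ[K] W) (B : W →ₗ[K] V) {l : K}

theorem comp_sub_smul_one_apply (y : W) : (A ∘ₗ B - l • 1) y = A (B y) - l • y := rfl

theorem range_comp_sub_smul_eq_comap (hl : l ≠ 0) :
    range (A ∘ₗ B - l • 1) = (range (B ∘ₗ A - l • 1)).comap B := by
  ext y
  simp only [mem_range, Submodule.mem_comap, comp_sub_smul_one_apply]
  constructor
  · rintro ⟨u, rfl⟩
    exact ⟨B u, by rw [map_sub, map_smul]⟩
  · rintro ⟨x, hx⟩
    refine ⟨l⁻¹ • (A x - y), ?_⟩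
    have hBA : B (A x) = B y + l • x := by rw [← hx, sub_add_cancel]
    simp only [map_smul, map_sub, hBA, map_add, smul_sub, smul_add, smul_smul, inv_mul_cancel₀ hl,
      mul_inv_cancel₀ hl, one_smul]
    abel

theorem apply_mem_ker_comp_sub_smul {x : V} (hx : x ∈ ker (B ∘ₗ A - l • 1)) :
    A x ∈ ker (A ∘ₗ B - l • 1) := by
  rw [mem_ker, comp_sub_smul_one_apply, sub_eq_zero] at hx ⊢
  rw [hx, map_smul]

theorem injOn_ker_comp_sub_smul (hl : l ≠ 0) : Set.InjOn A (ker (B ∘ₗ A - l • 1)) := by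
  intro x hx y hy hxy
  rw [SetLike.mem_coe, mem_ker, comp_sub_smul_one_apply, sub_eq_zero] at hx hy
  exact smul_right_injective V hl (show l • x = l • y by rw [← hx, ← hy, hxy])

theorem finiteDimensional_ker_comp_sub_smul (hl : l ≠ 0)
    [FiniteDimensional K (ker (A ∘ₗ B - l • 1))] : FiniteDimensional K (ker (B ∘ₗ A - l • 1)) :=
  Module.Finite.of_injective (A.restrict fun _ ↦ apply_mem_ker_comp_sub_smul A B)
    fun x y hxy ↦ Subtype.ext (injOn_ker_comp_sub_smul A B hl x.2 y.2 (congrArg Subtype.val hxy))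

theorem finiteDimensional_ker_comp_sub_smul_iff (hl : l ≠ 0) :
    FiniteDimensional K (ker (A ∘ₗ B - l • 1)) ↔ FiniteDimensional K (ker (B ∘ₗ A - l • 1)) :=
  ⟨fun _ ↦ finiteDimensional_ker_comp_sub_smul A B hl,
    fun _ ↦ finiteDimensional_ker_comp_sub_smul B A hl⟩

end LinearMap

namespace ContinuousLinearMap

variable {K V W : Type*} [Field K] [TopologicalSpace V] [AddCommGroup V] [Module K V]
  [IsTopologicalAddGroup V] [ContinuousConstSMul K V] [TopologicalSpace W] [AddCommGroup W]
  [Module K W] [IsTopologicalAddGroup W] [ContinuousConstSMul K W]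
  (A : V →L[K] W) (B : W →L[K] V) {l : K}

theorem isClosed_range_comp_sub_smul (hl : l ≠ 0)
    (h : IsClosed (Set.range (B.comp A - l • (1 : V →L[K] V)))) :
    IsClosed (Set.range (A.comp B - l • (1 : W →L[K] W))) := by
  have h_range : Set.range (A.comp B - l • (1 : W →L[K] W)) =
      B ⁻¹' Set.range (B.comp A - l • (1 : V →L[K] V)) :=
    congrArg SetLike.coe (LinearMap.range_comp_sub_smul_eq_comap (A : V →ₗ[K] W) B hl)
  exact h_range ▸ h.preimage B.continuous

theorem isClosed_range_comp_sub_smul_iff (hl : l ≠ 0) :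
    IsClosed (Set.range (A.comp B - l • (1 : W →L[K] W))) ↔
      IsClosed (Set.range (B.comp A - l • (1 : V →L[K] V))) :=
  ⟨isClosed_range_comp_sub_smul B A hl, isClosed_range_comp_sub_smul A B hl⟩

end ContinuousLinearMap

theorem stmt8_general {X Y : Type*} [NormedAddCommGroup X] [NormedSpace ℂ X]
    [NormedAddCommGroup Y] [NormedSpace ℂ Y]
    (A : X →L[ℂ] Y) (B : Y →L[ℂ] X) (l : ℂ) (hl : l ≠ 0) :
    (IsClosed (Set.range (A.comp B - l • (1 : Y →L[ℂ] Y))) ∧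
      FiniteDimensional ℂ (LinearMap.ker ((A.comp B - l • (1 : Y →L[ℂ] Y) : Y →L[ℂ] Y) : Y →ₗ[ℂ] Y))) ↔
    (IsClosed (Set.range (B.comp A - l • (1 : X →L[ℂ] X))) ∧
      FiniteDimensional ℂ (LinearMap.ker ((B.comp A - l • (1 : X →L[ℂ] X) : X →L[ℂ] X) : X →ₗ[ℂ] X))) :=
  and_congr (ContinuousLinearMap.isClosed_range_comp_sub_smul_iff A B hl)
    (LinearMap.finiteDimensional_ker_comp_sub_smul_iff (A : X →ₗ[ℂ] Y) B hl)

/-- For bounded operators and `λ ≠ 0`, `AB - λ` is upper semi-Fredholm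
(closed range and finite-dimensional kernel) iff `BA - λ` is. -/
theorem stmt8 {X Y : Type*} [NormedAddCommGroup X] [NormedSpace ℂ X] [CompleteSpace X]
    [NormedAddCommGroup Y] [NormedSpace ℂ Y] [CompleteSpace Y]
    (A : X →L[ℂ] Y) (B : Y →L[ℂ] X) (l : ℂ) (hl : l ≠ 0) :
    (IsClosed (Set.range (A.comp B - l • (1 : Y →L[ℂ] Y))) ∧
      FiniteDimensional ℂ (LinearMap.ker ((A.comp B - l • (1 : Y →L[ℂ] Y) : Y →L[ℂ] Y) : Y →ₗ[ℂ] Y))) ↔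
    (IsClosed (Set.range (B.comp A - l • (1 : X →L[ℂ] X))) ∧
      FiniteDimensional ℂ (LinearMap.ker ((B.comp A - l • (1 : X →L[ℂ] X) : X →L[ℂ] X) : X →ₗ[ℂ] X))) :=
  stmt8_general A B l hl
end

section
/- Let A : X → Y and B : Y → X be bounded operators between Banach spaces and let λ ≠ 0. Then AB − λ is Fredholm if and only if BA − λ is Fredholm; hence the essential spectra of AB and BA coincide away from 0. -/
/-!
For `l ≠ 0`, `A` maps `ker (BA - l)` onto `ker (AB - l)`, since `y = A (l⁻¹ • B y)` when
`A B y = l • y`, and `A` induces a surjection of `X ⧸ range (BA - l)` onto `Y ⧸ range (AB - l)`,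
since `y ≡ A (l⁻¹ • B y)` modulo `range (AB - l)`. So finite-dimensionality of kernel and cokernel
passes from `BA - l` to `AB - l`, and by symmetry back. Closedness of the range is then
automatic: if `u : E →L F` between Banach spaces has a finite-dimensional complement `G` of its
range, the open mapping theorem for `(x, m) ↦ u x + m` on `E × G` makes it a quotient map, and the
preimage of `range u` is the closed set `E × {0}`.
-/

open Function

namespace LinearMap

variable {K M N : Type*} [Field K] [AddCommGroup M] [Module K M] [AddCommGroup N] [Module K N]
  (f : M →ₗ[K] N) (g : N →ₗ[K] M) {l : K}

theorem ker_comp_sub_smul_id_le_map (hl : l ≠ 0) :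
    ker (f ∘ₗ g - l • id) ≤ (ker (g ∘ₗ f - l • id)).map f := by
  intro y hy
  have hy : f (g y) = l • y := by simpa [sub_eq_zero] using hy
  refine ⟨l⁻¹ • g y, ?_, ?_⟩
  · simp [hy]
  · simp [hy, inv_smul_smul₀ hl]

theorem finiteDimensional_ker_comp_sub_smul_id (hl : l ≠ 0)
    [FiniteDimensional K (ker (g ∘ₗ f - l • id))] :
    FiniteDimensional K (ker (f ∘ₗ g - l • id)) :=
  Submodule.finiteDimensional_of_le (ker_comp_sub_smul_id_le_map f g hl)

theorem range_comp_sub_smul_id_le_comap :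
    range (g ∘ₗ f - l • id) ≤ (range (f ∘ₗ g - l • id)).comap f := by
  rintro _ ⟨x, rfl⟩
  exact ⟨f x, by simp⟩

theorem surjective_mapQ_range_comp_sub_smul_id (hl : l ≠ 0) :
    Surjective ((range (g ∘ₗ f - l • id)).mapQ _ f (range_comp_sub_smul_id_le_comap f g)) := by
  intro q
  obtain ⟨y, rfl⟩ := Submodule.Quotient.mk_surjective _ q
  refine ⟨Submodule.Quotient.mk (l⁻¹ • g y), (Submodule.Quotient.eq _).2 ⟨l⁻¹ • y, ?_⟩⟩
  simp [smul_sub, smul_smul, hl]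

theorem finiteDimensional_quotient_range_comp_sub_smul_id (hl : l ≠ 0)
    [FiniteDimensional K (M ⧸ range (g ∘ₗ f - l • id))] :
    FiniteDimensional K (N ⧸ range (f ∘ₗ g - l • id)) :=
  Module.Finite.of_surjective _ (surjective_mapQ_range_comp_sub_smul_id f g hl)

end LinearMap

namespace ContinuousLinearMap

variable {𝕜 E F : Type*} [NontriviallyNormedField 𝕜]
  [NormedAddCommGroup E] [NormedSpace 𝕜 E] [NormedAddCommGroup F] [NormedSpace 𝕜 F]

theorem isClosed_range_of_finiteDimensional_quotient [CompleteSpace 𝕜] [CompleteSpace E]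
    [CompleteSpace F] (f : E →L[𝕜] F)
    [FiniteDimensional 𝕜 (F ⧸ (f : E →ₗ[𝕜] F).range)] : IsClosed (Set.range f) := by
  obtain ⟨G, hG⟩ := Submodule.exists_isCompl (f : E →ₗ[𝕜] F).range
  have : FiniteDimensional 𝕜 G := (Submodule.quotientEquivOfIsCompl _ _ hG).finiteDimensional
  have : CompleteSpace G := FiniteDimensional.complete 𝕜 G
  let g := f.coprod G.subtypeL
  have hg : Surjective g := LinearMap.range_eq_top.1 <| by
    simp [g, LinearMap.range_coprod, hG.sup_eq_top]
  have hpre : g ⁻¹' Set.range f = Set.univ ×ˢ {0} := by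
    ext ⟨x, m⟩
    suffices f x + m ∈ (f : E →ₗ[𝕜] F).range ↔ m = 0 by simpa [g] using this
    rw [Submodule.add_mem_iff_right _ (⟨x, rfl⟩ : f x ∈ (f : E →ₗ[𝕜] F).range),
      ← Submodule.coe_eq_zero]
    exact ⟨fun hm => hG.disjoint.le_bot ⟨hm, m.2⟩, fun hm => hm ▸ Submodule.zero_mem _⟩
  rw [← (g.isQuotientMap hg).isClosed_preimage, hpre]
  exact isClosed_univ.prod isClosed_singleton

/-- Unlike `ContinuousLinearMap.IsFredholm`, this asks for no strictness or complemented kernel. -/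
def IsFredholmOperator (u : E →L[𝕜] F) : Prop :=
  IsClosed (Set.range u) ∧ FiniteDimensional 𝕜 (LinearMap.ker (u : E →ₗ[𝕜] F)) ∧
    FiniteDimensional 𝕜 (F ⧸ LinearMap.range (u : E →ₗ[𝕜] F))

theorem coe_comp_sub_smul_one (A : E →L[𝕜] F) (B : F →L[𝕜] E) (l : 𝕜) :
    ((A.comp B - l • (1 : F →L[𝕜] F) : F →L[𝕜] F) : F →ₗ[𝕜] F) =
      (A : E →ₗ[𝕜] F) ∘ₗ (B : F →ₗ[𝕜] E) - l • LinearMap.id := by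
  ext; simp

variable [CompleteSpace 𝕜]

theorem IsFredholmOperator.of_comp_sub_smul_one [CompleteSpace F] {A : E →L[𝕜] F}
    {B : F →L[𝕜] E} {l : 𝕜} (hl : l ≠ 0) (h : IsFredholmOperator (B.comp A - l • (1 : E →L[𝕜] E))) :
    IsFredholmOperator (A.comp B - l • (1 : F →L[𝕜] F)) := by
  obtain ⟨-, hker, hcoker⟩ := h
  rw [coe_comp_sub_smul_one] at hker hcoker
  have hcoker' : FiniteDimensional 𝕜 (F ⧸
      LinearMap.range ((A.comp B - l • 1 : F →L[𝕜] F) : F →ₗ[𝕜] F)) := by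
    rw [coe_comp_sub_smul_one]
    exact LinearMap.finiteDimensional_quotient_range_comp_sub_smul_id _ _ hl
  refine ⟨isClosed_range_of_finiteDimensional_quotient _, ?_, hcoker'⟩
  rw [coe_comp_sub_smul_one]
  exact LinearMap.finiteDimensional_ker_comp_sub_smul_id _ _ hl

theorem isFredholmOperator_comp_sub_smul_one_iff [CompleteSpace E] [CompleteSpace F]
    (A : E →L[𝕜] F) (B : F →L[𝕜] E) {l : 𝕜} (hl : l ≠ 0) :
    IsFredholmOperator (A.comp B - l • (1 : F →L[𝕜] F)) ↔
      IsFredholmOperator (B.comp A - l • (1 : E →L[𝕜] E)) :=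
  ⟨.of_comp_sub_smul_one hl, .of_comp_sub_smul_one hl⟩

end ContinuousLinearMap

/-- For bounded operators and `λ ≠ 0`, `AB - λ` is Fredholm iff `BA - λ`
is Fredholm; hence the essential spectra of `AB` and `BA` coincide away from `0`. -/
theorem stmt9 {X Y : Type*} [NormedAddCommGroup X] [NormedSpace ℂ X] [CompleteSpace X]
    [NormedAddCommGroup Y] [NormedSpace ℂ Y] [CompleteSpace Y]
    (A : X →L[ℂ] Y) (B : Y →L[ℂ] X) (l : ℂ) (hl : l ≠ 0) :
    ((IsClosed (Set.range (A.comp B - l • (1 : Y →L[ℂ] Y))) ∧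
        FiniteDimensional ℂ (LinearMap.ker (((A.comp B - l • (1 : Y →L[ℂ] Y) : Y →L[ℂ] Y) : Y →ₗ[ℂ] Y))) ∧
        FiniteDimensional ℂ (Y ⧸ LinearMap.range (((A.comp B - l • (1 : Y →L[ℂ] Y) : Y →L[ℂ] Y) : Y →ₗ[ℂ] Y)))) ↔
      (IsClosed (Set.range (B.comp A - l • (1 : X →L[ℂ] X))) ∧
        FiniteDimensional ℂ (LinearMap.ker (((B.comp A - l • (1 : X →L[ℂ] X) : X →L[ℂ] X) : X →ₗ[ℂ] X))) ∧
        FiniteDimensional ℂ (X ⧸ LinearMap.range (((B.comp A - l • (1 : X →L[ℂ] X) : X →L[ℂ] X) : X →ₗ[ℂ] X))))) ∧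
    ({μ : ℂ | ¬ (IsClosed (Set.range (A.comp B - μ • (1 : Y →L[ℂ] Y))) ∧
        FiniteDimensional ℂ (LinearMap.ker (((A.comp B - μ • (1 : Y →L[ℂ] Y) : Y →L[ℂ] Y) : Y →ₗ[ℂ] Y))) ∧
        FiniteDimensional ℂ (Y ⧸ LinearMap.range (((A.comp B - μ • (1 : Y →L[ℂ] Y) : Y →L[ℂ] Y) : Y →ₗ[ℂ] Y))))} \ {0} =
      {μ : ℂ | ¬ (IsClosed (Set.range (B.comp A - μ • (1 : X →L[ℂ] X))) ∧
        FiniteDimensional ℂ (LinearMap.ker (((B.comp A - μ • (1 : X →L[ℂ] X) : X →L[ℂ] X) : X →ₗ[ℂ] X))) ∧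
        FiniteDimensional ℂ (X ⧸ LinearMap.range (((B.comp A - μ • (1 : X →L[ℂ] X) : X →L[ℂ] X) : X →ₗ[ℂ] X))))} \ {0}) := by
  have key (μ : ℂ) (hμ : μ ≠ 0) :=
    ContinuousLinearMap.isFredholmOperator_comp_sub_smul_one_iff A B hμ
  exact ⟨key l hl, Set.ext fun μ => and_congr_left fun hμ => not_congr (key μ hμ)⟩
end

section
/- Let A : X → Y and B : Y → X be bounded operators between Banach spaces and let λ ≠ 0. Then λ belongs to the approximate point spectrum of AB if and only if λ belongs to the approximate point spectrum of BA. -/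
open Filter Topology

lemma stmt10_aux {X Y : Type*} [NormedAddCommGroup X] [NormedSpace ℂ X]
    [NormedAddCommGroup Y] [NormedSpace ℂ Y]
    (A : X →L[ℂ] Y) (B : Y →L[ℂ] X) (l : ℂ) (hl : l ≠ 0)
    (h : ∃ y : ℕ → Y, (∀ n, ‖y n‖ = 1) ∧
        Tendsto (fun n => A (B (y n)) - l • y n) atTop (𝓝 0)) :
    ∃ x : ℕ → X, (∀ n, ‖x n‖ = 1) ∧
        Tendsto (fun n => B (A (x n)) - l • x n) atTop (𝓝 0) := by
  obtain ⟨y, hy, hten⟩ := h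
  have hnorm : Tendsto (fun n => ‖A (B (y n)) - l • y n‖) atTop (𝓝 0) := by
    simpa using hten.norm
  have hlpos : (0:ℝ) < ‖l‖ := norm_pos_iff.mpr hl
  have hev : ∀ᶠ n in atTop, ‖A (B (y n)) - l • y n‖ < ‖l‖ / 2 :=
    hnorm.eventually_lt_const (by linarith)
  obtain ⟨N, hN⟩ := eventually_atTop.mp hev
  -- lower bound on ‖A (B (y n))‖ for n ≥ N
  have hAB : ∀ n, N ≤ n → ‖l‖ / 2 ≤ ‖A (B (y n))‖ := by
    intro n hn
    have h1 := hN n hn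
    have h2 : ‖l • y n‖ = ‖l‖ := by rw [norm_smul, hy n, mul_one]
    have h3 : ‖l • y n‖ - ‖A (B (y n)) - l • y n‖ ≤ ‖A (B (y n))‖ := by
      have := norm_sub_norm_le (A (B (y n))) (l • y n)
      have h4 : ‖A (B (y n)) - l • y n‖ = ‖A (B (y n)) - l • y n‖ := rfl
      nlinarith [abs_norm_sub_norm_le (A (B (y n))) (l • y n),
        abs_le.mp (abs_norm_sub_norm_le (A (B (y n))) (l • y n))]
    linarith [h3, h2 ▸ h3]
  have hAne : A ≠ 0 := by
    intro h0
    have := hAB N le_rfl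
    rw [h0] at this
    simp at this
    linarith
  have hApos : (0:ℝ) < ‖A‖ := norm_pos_iff.mpr hAne
  set c : ℝ := ‖l‖ / (2 * ‖A‖) with hc
  have hcpos : 0 < c := by positivity
  have hBy : ∀ n, N ≤ n → c ≤ ‖B (y n)‖ := by
    intro n hn
    have h1 := hAB n hn
    have h2 : ‖A (B (y n))‖ ≤ ‖A‖ * ‖B (y n)‖ := A.le_opNorm _
    rw [hc, div_le_iff₀ (by positivity)]
    nlinarith
  refine ⟨fun n => (‖B (y (n + N))‖ : ℂ)⁻¹ • B (y (n + N)), ?_, ?_⟩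
  · intro n
    have hb : c ≤ ‖B (y (n + N))‖ := hBy _ (Nat.le_add_left N n)
    have hb0 : ‖B (y (n + N))‖ ≠ 0 := ne_of_gt (lt_of_lt_of_le hcpos hb)
    rw [norm_smul]
    simp [hb0]
  · rw [tendsto_zero_iff_norm_tendsto_zero]
    have key : ∀ n, ‖B (A ((‖B (y (n + N))‖ : ℂ)⁻¹ • B (y (n + N)))) -
        l • ((‖B (y (n + N))‖ : ℂ)⁻¹ • B (y (n + N)))‖ ≤
        c⁻¹ * (‖B‖ * ‖A (B (y (n + N))) - l • y (n + N)‖) := by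
      intro n
      have hb : c ≤ ‖B (y (n + N))‖ := hBy _ (Nat.le_add_left N n)
      have hb0 : (0:ℝ) < ‖B (y (n + N))‖ := lt_of_lt_of_le hcpos hb
      have heq : B (A ((‖B (y (n + N))‖ : ℂ)⁻¹ • B (y (n + N)))) -
          l • ((‖B (y (n + N))‖ : ℂ)⁻¹ • B (y (n + N))) =
          (‖B (y (n + N))‖ : ℂ)⁻¹ • B (A (B (y (n + N))) - l • y (n + N)) := by
        rw [map_smul, map_smul, map_sub, map_smul, smul_sub, smul_comm l]
      rw [heq, norm_smul]
      have h1 : ‖((‖B (y (n + N))‖ : ℂ)⁻¹)‖ = ‖B (y (n + N))‖⁻¹ := by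
        rw [norm_inv, Complex.norm_real, Real.norm_of_nonneg hb0.le]
      rw [h1]
      have h2 : ‖B (A (B (y (n + N))) - l • y (n + N))‖ ≤
          ‖B‖ * ‖A (B (y (n + N))) - l • y (n + N)‖ := B.le_opNorm _
      have h3 : ‖B (y (n + N))‖⁻¹ ≤ c⁻¹ := inv_anti₀ hcpos hb
      have h4 : (0:ℝ) ≤ ‖B (A (B (y (n + N))) - l • y (n + N))‖ := norm_nonneg _
      calc ‖B (y (n + N))‖⁻¹ * ‖B (A (B (y (n + N))) - l • y (n + N))‖
          ≤ c⁻¹ * ‖B (A (B (y (n + N))) - l • y (n + N))‖ := by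
            apply mul_le_mul_of_nonneg_right h3 h4
        _ ≤ c⁻¹ * (‖B‖ * ‖A (B (y (n + N))) - l • y (n + N)‖) := by
            apply mul_le_mul_of_nonneg_left h2 (by positivity)
    have hlim : Tendsto (fun n => c⁻¹ * (‖B‖ * ‖A (B (y (n + N))) - l • y (n + N)‖))
        atTop (𝓝 0) := by
      have : Tendsto (fun n => ‖A (B (y (n + N))) - l • y (n + N)‖) atTop (𝓝 0) :=
        hnorm.comp (tendsto_atTop_mono (fun n => Nat.le_add_right n N) tendsto_id)
      simpa using (this.const_mul ‖B‖).const_mul c⁻¹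
    exact squeeze_zero (fun n => norm_nonneg _) key hlim

/-- For bounded operators and `λ ≠ 0`, `λ` belongs to the approximate
point spectrum of `AB` iff it belongs to the approximate point spectrum of `BA`. -/
theorem stmt10 {X Y : Type*} [NormedAddCommGroup X] [NormedSpace ℂ X] [CompleteSpace X]
    [NormedAddCommGroup Y] [NormedSpace ℂ Y] [CompleteSpace Y]
    (A : X →L[ℂ] Y) (B : Y →L[ℂ] X) (l : ℂ) (hl : l ≠ 0) :
    (∃ y : ℕ → Y, (∀ n, ‖y n‖ = 1) ∧
        Tendsto (fun n => A (B (y n)) - l • y n) atTop (𝓝 0)) ↔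
    (∃ x : ℕ → X, (∀ n, ‖x n‖ = 1) ∧
        Tendsto (fun n => B (A (x n)) - l • x n) atTop (𝓝 0)) := by
  constructor
  · exact stmt10_aux A B l hl
  · exact stmt10_aux B A l hl
end

section
/- Let A : X → Y and B : Y → X be bounded operators between Banach spaces and let λ ≠ 0. Then λ belongs to the residual spectrum of AB if and only if λ belongs to the residual spectrum of BA, and likewise for the continuous spectrum. -/
/-!
For `l ≠ 0` the operators `AB - l` and `BA - l` are intertwined by `A` and `B`:
`A (BA - l) = (AB - l) A` and `B (AB - l) = (BA - l) B`. Together with the identity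
`l • y = A (B y) - (AB - l) y`, this transfers injectivity, surjectivity and density of the
range from one operator to the other. On a Banach space `l ∈ σ(T)` exactly when `T - l` is not
bijective (open mapping theorem), so membership in the spectrum transfers as well, and both
the residual and the continuous spectrum are Boolean combinations of these four properties.
-/

open Function

section Algebraic

variable {K M N : Type*} [Field K] [AddCommGroup M] [Module K M] [AddCommGroup N] [Module K N]
  {l : K}

theorem LinearMap.injective_comp_sub_smul_of_swap (A : M →ₗ[K] N) (B : N →ₗ[K] M) (hl : l ≠ 0)
    (h : Injective ⇑(B ∘ₗ A - l • (1 : Module.End K M))) :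
    Injective ⇑(A ∘ₗ B - l • (1 : Module.End K N)) := by
  refine (injective_iff_map_eq_zero _).2 fun y hy => ?_
  have hABy : A (B y) = l • y := by simpa [sub_eq_zero] using hy
  have hBy : B y = 0 := (injective_iff_map_eq_zero _).1 h (B y) (by simp [hABy])
  simpa [hBy, hl] using hABy.symm

theorem LinearMap.injective_comp_sub_smul_comm (A : M →ₗ[K] N) (B : N →ₗ[K] M) (hl : l ≠ 0) :
    Injective ⇑(A ∘ₗ B - l • (1 : Module.End K N)) ↔
      Injective ⇑(B ∘ₗ A - l • (1 : Module.End K M)) :=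
  ⟨B.injective_comp_sub_smul_of_swap A hl, A.injective_comp_sub_smul_of_swap B hl⟩

/-- If `(AB - l) y = A z`, then `x = l⁻¹ (B y - z)` solves `(BA - l) x = z`. -/
theorem LinearMap.surjective_comp_sub_smul_of_swap (A : M →ₗ[K] N) (B : N →ₗ[K] M) (hl : l ≠ 0)
    (h : Surjective ⇑(A ∘ₗ B - l • (1 : Module.End K N))) :
    Surjective ⇑(B ∘ₗ A - l • (1 : Module.End K M)) := by
  intro z
  obtain ⟨y, hy⟩ := h (A z)
  have hABy : A (B y) = A z + l • y := by simpa [sub_eq_iff_eq_add] using hy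
  refine ⟨l⁻¹ • (B y - z), ?_⟩
  simp only [sub_apply, comp_apply, smul_apply, Module.End.one_apply, map_smul, map_sub, hABy,
    map_add]
  rw [add_sub_cancel_right, sub_sub_cancel, inv_smul_smul₀ hl]

theorem LinearMap.surjective_comp_sub_smul_comm (A : M →ₗ[K] N) (B : N →ₗ[K] M) (hl : l ≠ 0) :
    Surjective ⇑(A ∘ₗ B - l • (1 : Module.End K N)) ↔
      Surjective ⇑(B ∘ₗ A - l • (1 : Module.End K M)) :=
  ⟨A.surjective_comp_sub_smul_of_swap B hl, B.surjective_comp_sub_smul_of_swap A hl⟩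

end Algebraic

section Topological

variable {K M N : Type*} [Field K]
  [AddCommGroup M] [Module K M] [TopologicalSpace M] [IsTopologicalAddGroup M]
  [ContinuousConstSMul K M]
  [AddCommGroup N] [Module K N] [TopologicalSpace N] [IsTopologicalAddGroup N]
  [ContinuousConstSMul K N]
  {l : K}

theorem ContinuousLinearMap.denseRange_comp_sub_smul_of_swap (A : M →L[K] N) (B : N →L[K] M)
    (hl : l ≠ 0) (h : DenseRange ⇑(A.comp B - l • (1 : N →L[K] N))) :
    DenseRange ⇑(B.comp A - l • (1 : M →L[K] M)) := by
  set S := B.comp A - l • (1 : M →L[K] M)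
  let V := (LinearMap.range (S : M →ₗ[K] M)).topologicalClosure
  have hB : ∀ y, B y ∈ V := fun y =>
    map_mem_closure B.continuous (h y) <| by
      rintro _ ⟨z, rfl⟩
      exact ⟨B z, by simp [S]⟩
  have hS : ∀ x, S x ∈ V := fun x => subset_closure ⟨x, rfl⟩
  intro x
  have hx : x = l⁻¹ • (B (A x) - S x) := by simp [S, inv_smul_smul₀ hl]
  rw [hx]
  exact V.smul_mem _ (V.sub_mem (hB _) (hS x))

theorem ContinuousLinearMap.denseRange_comp_sub_smul_comm (A : M →L[K] N) (B : N →L[K] M)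
    (hl : l ≠ 0) :
    DenseRange ⇑(A.comp B - l • (1 : N →L[K] N)) ↔
      DenseRange ⇑(B.comp A - l • (1 : M →L[K] M)) :=
  ⟨A.denseRange_comp_sub_smul_of_swap B hl, B.denseRange_comp_sub_smul_of_swap A hl⟩

end Topological

theorem ContinuousLinearMap.mem_spectrum_iff_not_bijective {𝕜 E : Type*}
    [NontriviallyNormedField 𝕜] [NormedAddCommGroup E] [NormedSpace 𝕜 E] [CompleteSpace E]
    (T : E →L[𝕜] E) (l : 𝕜) :
    l ∈ spectrum 𝕜 T ↔ ¬ Bijective ⇑(T - l • (1 : E →L[𝕜] E)) := by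
  rw [spectrum.mem_iff, Algebra.algebraMap_eq_smul_one, ← neg_sub, IsUnit.neg_iff,
    isUnit_iff_bijective]

/-- For bounded operators and `λ ≠ 0`, `λ` is in the residual spectrum of
`AB` iff it is in the residual spectrum of `BA`, and likewise for the continuous
spectrum. -/
theorem stmt11 {X Y : Type*} [NormedAddCommGroup X] [NormedSpace ℂ X] [CompleteSpace X]
    [NormedAddCommGroup Y] [NormedSpace ℂ Y] [CompleteSpace Y]
    (A : X →L[ℂ] Y) (B : Y →L[ℂ] X) (l : ℂ) (hl : l ≠ 0) :
    ((l ∈ spectrum ℂ (A.comp B) ∧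
        LinearMap.ker ((A.comp B - l • (1 : Y →L[ℂ] Y) : Y →L[ℂ] Y) : Y →ₗ[ℂ] Y) = ⊥ ∧
        ¬ Dense (Set.range (A.comp B - l • (1 : Y →L[ℂ] Y)))) ↔
      (l ∈ spectrum ℂ (B.comp A) ∧
        LinearMap.ker ((B.comp A - l • (1 : X →L[ℂ] X) : X →L[ℂ] X) : X →ₗ[ℂ] X) = ⊥ ∧
        ¬ Dense (Set.range (B.comp A - l • (1 : X →L[ℂ] X))))) ∧
    ((l ∈ spectrum ℂ (A.comp B) ∧
        LinearMap.ker ((A.comp B - l • (1 : Y →L[ℂ] Y) : Y →L[ℂ] Y) : Y →ₗ[ℂ] Y) = ⊥ ∧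
        Dense (Set.range (A.comp B - l • (1 : Y →L[ℂ] Y))) ∧
        Set.range (A.comp B - l • (1 : Y →L[ℂ] Y)) ≠ Set.univ) ↔
      (l ∈ spectrum ℂ (B.comp A) ∧
        LinearMap.ker ((B.comp A - l • (1 : X →L[ℂ] X) : X →L[ℂ] X) : X →ₗ[ℂ] X) = ⊥ ∧
        Dense (Set.range (B.comp A - l • (1 : X →L[ℂ] X))) ∧
        Set.range (B.comp A - l • (1 : X →L[ℂ] X)) ≠ Set.univ)) := by
  have hinj : Injective ⇑(A.comp B - l • (1 : Y →L[ℂ] Y)) ↔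
      Injective ⇑(B.comp A - l • (1 : X →L[ℂ] X)) :=
    LinearMap.injective_comp_sub_smul_comm (A : X →ₗ[ℂ] Y) B hl
  have hsurj : Surjective ⇑(A.comp B - l • (1 : Y →L[ℂ] Y)) ↔
      Surjective ⇑(B.comp A - l • (1 : X →L[ℂ] X)) :=
    LinearMap.surjective_comp_sub_smul_comm (A : X →ₗ[ℂ] Y) B hl
  have hdense : Dense (Set.range (A.comp B - l • (1 : Y →L[ℂ] Y))) ↔
      Dense (Set.range (B.comp A - l • (1 : X →L[ℂ] X))) :=
    A.denseRange_comp_sub_smul_comm B hl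
  have hspec : l ∈ spectrum ℂ (A.comp B) ↔ l ∈ spectrum ℂ (B.comp A) := by
    simp only [ContinuousLinearMap.mem_spectrum_iff_not_bijective, Bijective, hinj, hsurj]
  simp only [LinearMap.ker_eq_bot, ContinuousLinearMap.coe_coe, ne_eq, Set.range_eq_univ, hspec,
    hinj, hsurj, hdense, and_self]
end

section
/- Let A : X → Y and B : Y → X be bounded operators between Banach spaces, and suppose 0 ∈ ρ(AB) while 0 ∈ σ(BA). Then 0 is an isolated point of σ(BA) and a pole of order one of the resolvent of BA, i.e. there is a constant K and δ > 0 such that ‖(BA − λ)^{-1}‖ ≤ K/|λ| for all 0 < |λ| < δ. -/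
/-- If `0 ∈ ρ(AB)` while `0 ∈ σ(BA)`, then `0` is an isolated point of
`σ(BA)` and a pole of order one of the resolvent of `BA`: there are `K` and `δ > 0`
with `‖(BA - λ)⁻¹‖ ≤ K/|λ|` for all `0 < |λ| < δ`. -/
theorem stmt15 {X Y : Type*} [NormedAddCommGroup X] [NormedSpace ℂ X] [CompleteSpace X]
    [NormedAddCommGroup Y] [NormedSpace ℂ Y] [CompleteSpace Y]
    (A : X →L[ℂ] Y) (B : Y →L[ℂ] X)
    (h0AB : (0 : ℂ) ∈ resolventSet ℂ (A.comp B))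
    (h0BA : (0 : ℂ) ∈ spectrum ℂ (B.comp A)) :
    ∃ K : ℝ, ∃ δ > (0 : ℝ), ∀ l : ℂ, l ≠ 0 → ‖l‖ < δ →
      l ∈ resolventSet ℂ (B.comp A) ∧
      ‖Ring.inverse (B.comp A - l • (1 : X →L[ℂ] X))‖ ≤ K / ‖l‖ := by
  have hu0 : IsUnit (algebraMap ℂ (Y →L[ℂ] Y) 0 - A.comp B) :=
    spectrum.mem_resolventSet_iff.mp h0AB
  set g : ℂ → (Y →L[ℂ] Y) :=
    fun l => Ring.inverse (algebraMap ℂ (Y →L[ℂ] Y) l - A.comp B) with hg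
  obtain ⟨u, hu⟩ := hu0
  have hcont : ContinuousAt g 0 := by
    have h1 : ContinuousAt (fun l : ℂ => algebraMap ℂ (Y →L[ℂ] Y) l - A.comp B) 0 := by
      fun_prop
    have h2 : ContinuousAt Ring.inverse (algebraMap ℂ (Y →L[ℂ] Y) 0 - A.comp B) := by
      rw [← hu]; exact NormedRing.inverse_continuousAt u
    have : g = Ring.inverse ∘ (fun l : ℂ => algebraMap ℂ (Y →L[ℂ] Y) l - A.comp B) := rfl
    rw [this]
    exact ContinuousAt.comp (f := fun l : ℂ => algebraMap ℂ (Y →L[ℂ] Y) l - A.comp B)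
      (x := (0:ℂ)) h2 h1
  obtain ⟨δ1, hδ1, hball⟩ := Metric.continuousAt_iff.mp hcont 1 one_pos
  obtain ⟨δ2, hδ2, hball2⟩ :=
    Metric.isOpen_iff.mp (spectrum.isOpen_resolventSet (𝕜 := ℂ) (A.comp B)) 0 h0AB
  set M : ℝ := ‖g 0‖ + 1 with hM
  refine ⟨‖B‖ * M * ‖A‖ + 1, min δ1 δ2, lt_min hδ1 hδ2, ?_⟩
  intro l hl0 hlδ
  have hdist : dist l 0 < min δ1 δ2 := by simpa [dist_zero_right] using hlδ
  have hlAB : l ∈ resolventSet ℂ (A.comp B) :=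
    hball2 (Metric.mem_ball.mpr (hdist.trans_le (min_le_right _ _)))
  have hCle : ‖g l‖ ≤ M := by
    have := hball (show dist l 0 < δ1 from hdist.trans_le (min_le_left _ _))
    have h := norm_le_norm_add_norm_sub' (g l) (g 0)
    rw [dist_eq_norm] at this
    linarith
  set C : Y →L[ℂ] Y := g l with hC
  have hUnit : IsUnit (algebraMap ℂ (Y →L[ℂ] Y) l - A.comp B) :=
    spectrum.mem_resolventSet_iff.mp hlAB
  have hC1 : (algebraMap ℂ (Y →L[ℂ] Y) l - A.comp B) * C = 1 :=
    Ring.mul_inverse_cancel _ hUnit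
  have hC2 : C * (algebraMap ℂ (Y →L[ℂ] Y) l - A.comp B) = 1 :=
    Ring.inverse_mul_cancel _ hUnit
  have keyE : ∀ v : Y, l • C v - A (B (C v)) = v := by
    intro v
    have := congrArg (fun f : Y →L[ℂ] Y => f v) hC1
    simpa [Algebra.algebraMap_eq_smul_one, ContinuousLinearMap.mul_apply,
      ContinuousLinearMap.sub_apply, ContinuousLinearMap.smul_apply] using this
  have keyE2 : ∀ v : Y, C (l • v - A (B v)) = v := by
    intro v
    have := congrArg (fun f : Y →L[ℂ] Y => f v) hC2
    simpa [Algebra.algebraMap_eq_smul_one, ContinuousLinearMap.mul_apply,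
      ContinuousLinearMap.sub_apply, ContinuousLinearMap.smul_apply] using this
  set D : X →L[ℂ] X := l⁻¹ • (B.comp (C.comp A) + 1) with hD
  have hmain1 : (l • (1 : X →L[ℂ] X) - B.comp A) * D = 1 := by
    ext x
    have hw : B (A (B (C (A x)))) = l • B (C (A x)) - B (A x) := by
      have := congrArg B (keyE (A x))
      rw [map_sub, map_smul] at this
      linear_combination (norm := module) -this
    simp only [ContinuousLinearMap.mul_apply, ContinuousLinearMap.one_apply, hD,
      ContinuousLinearMap.smul_apply, ContinuousLinearMap.add_apply,
      ContinuousLinearMap.comp_apply, ContinuousLinearMap.sub_apply, map_smul, map_add,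
      smul_sub, smul_add, hw, smul_smul, inv_mul_cancel₀ hl0, mul_inv_cancel₀ hl0, one_smul]
    module
  have hmain2 : D * (l • (1 : X →L[ℂ] X) - B.comp A) = 1 := by
    ext x
    have hv : C (A (l • x - B (A x))) = A x := by
      have := keyE2 (A x)
      rw [show l • A x - A (B (A x)) = A (l • x - B (A x)) by rw [map_sub, map_smul]] at this
      exact this
    simp only [ContinuousLinearMap.mul_apply, ContinuousLinearMap.one_apply, hD,
      ContinuousLinearMap.smul_apply, ContinuousLinearMap.add_apply,
      ContinuousLinearMap.comp_apply, ContinuousLinearMap.sub_apply, hv,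
      smul_sub, smul_add, smul_smul, inv_mul_cancel₀ hl0, one_smul]
    module
  set uX : (X →L[ℂ] X)ˣ := ⟨l • (1 : X →L[ℂ] X) - B.comp A, D, hmain1, hmain2⟩ with huX
  constructor
  · rw [spectrum.mem_resolventSet_iff]
    exact ⟨uX, by rw [Algebra.algebraMap_eq_smul_one]⟩
  · have hinv : Ring.inverse (B.comp A - l • (1 : X →L[ℂ] X)) = -D := by
      have h1 : B.comp A - l • (1 : X →L[ℂ] X) = ((-uX : (X →L[ℂ] X)ˣ) : X →L[ℂ] X) := by
        simp [huX]
      rw [h1, Ring.inverse_unit (-uX)]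
      simp [huX]
    have hns : ‖D‖ = ‖l‖⁻¹ * ‖B.comp (C.comp A) + 1‖ := by
      rw [hD, norm_smul l⁻¹ (B.comp (C.comp A) + 1), norm_inv]
    rw [hinv, norm_neg, hns, div_eq_inv_mul]
    refine mul_le_mul_of_nonneg_left ?_ (by positivity)
    calc ‖B.comp (C.comp A) + 1‖ ≤ ‖B.comp (C.comp A)‖ + ‖(1 : X →L[ℂ] X)‖ := norm_add_le _ _
      _ ≤ ‖B‖ * ‖C‖ * ‖A‖ + 1 := by
          gcongr
          · calc ‖B.comp (C.comp A)‖ ≤ ‖B‖ * ‖C.comp A‖ := ContinuousLinearMap.opNorm_comp_le _ _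
              _ ≤ ‖B‖ * (‖C‖ * ‖A‖) := by
                  gcongr; exact ContinuousLinearMap.opNorm_comp_le _ _
              _ = ‖B‖ * ‖C‖ * ‖A‖ := by ring
          · exact ContinuousLinearMap.norm_id_le
      _ ≤ ‖B‖ * M * ‖A‖ + 1 := by
          have := mul_le_mul_of_nonneg_right
            (mul_le_mul_of_nonneg_left hCle (norm_nonneg B)) (norm_nonneg A)
          linarith
end

section
/- Let A : X → Y and B : Y → X be bounded operators between Banach spaces. Then there is a constant C > 0 (depending only on A and B) such that for all λ ∈ ρ(BA) with λ ≠ 0 and all μ ∈ ρ(BA): ‖(BA − λ)^{-1}‖ ≤ (C·M₁(λ)·M₂(μ)/|λ|)·(|μ| + |λ − μ|(2 + |λ|)(2 + |μ|)), where M₁(λ) = max{1, ‖(AB − λ)^{-1}‖} and M₂(μ) = max{1, ‖(BA − μ)^{-1}‖}. -/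
open ContinuousLinearMap in
lemma aux16 {X Y : Type*} [NormedAddCommGroup X] [NormedSpace ℂ X]
    [NormedAddCommGroup Y] [NormedSpace ℂ Y]
    (A : X →L[ℂ] Y) (B : Y →L[ℂ] X) {l : ℂ} (hl0 : l ≠ 0)
    (R : X →L[ℂ] X)
    (hR1 : (B.comp A - l • (1 : X →L[ℂ] X)) * R = 1)
    (hR2 : R * (B.comp A - l • (1 : X →L[ℂ] X)) = 1) :
    (A.comp B - l • (1 : Y →L[ℂ] Y)) * (l⁻¹ • (A.comp (R.comp B) - 1)) = 1 ∧
    (l⁻¹ • (A.comp (R.comp B) - 1)) * (A.comp B - l • (1 : Y →L[ℂ] Y)) = 1 := by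
  constructor
  · ext x
    have h1 := congrFun (congrArg DFunLike.coe hR1) (B x)
    simp only [ContinuousLinearMap.mul_apply, ContinuousLinearMap.sub_apply,
      ContinuousLinearMap.smul_apply, ContinuousLinearMap.one_apply,
      ContinuousLinearMap.coe_comp', Function.comp_apply, ContinuousLinearMap.map_sub,
      ContinuousLinearMap.map_smul, ContinuousLinearMap.map_smulₛₗ, RingHom.id_apply] at *
    rw [smul_sub, smul_sub]
    have h3 : B (A (R (B x))) = B x + l • R (B x) := sub_eq_iff_eq_add.mp h1
    have h4 := congrArg A h3
    simp only [map_add, map_smul] at h4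
    rw [h4]
    simp only [smul_add, smul_sub, smul_smul, inv_mul_cancel₀ hl0, mul_inv_cancel₀ hl0, one_smul]
    abel
  · ext x
    have h2 := congrFun (congrArg DFunLike.coe hR2) (B x)
    simp only [ContinuousLinearMap.mul_apply, ContinuousLinearMap.sub_apply,
      ContinuousLinearMap.smul_apply, ContinuousLinearMap.one_apply,
      ContinuousLinearMap.coe_comp', Function.comp_apply, ContinuousLinearMap.map_sub,
      ContinuousLinearMap.map_smul, ContinuousLinearMap.map_smulₛₗ, RingHom.id_apply] at *
    rw [smul_sub, smul_sub]
    have h3 : R (B (A (B x))) = B x + l • R (B x) := sub_eq_iff_eq_add.mp h2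
    have h4 := congrArg A h3
    simp only [map_add, map_smul] at h4
    rw [h4]
    simp only [smul_add, smul_sub, smul_smul, inv_mul_cancel₀ hl0, mul_inv_cancel₀ hl0, one_smul]
    abel

set_option maxHeartbeats 1000000 in
/-- There is `C > 0` depending only on `A` and `B` such that for all
`λ ∈ ρ(BA) \ {0}` and `μ ∈ ρ(BA)`,
`‖(BA - λ)⁻¹‖ ≤ (C M₁(λ) M₂(μ)/|λ|)(|μ| + |λ - μ|(2 + |λ|)(2 + |μ|))` where
`M₁(λ) = max {1, ‖(AB - λ)⁻¹‖}` and `M₂(μ) = max {1, ‖(BA - μ)⁻¹‖}`. -/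
theorem stmt16 {X Y : Type*} [NormedAddCommGroup X] [NormedSpace ℂ X] [CompleteSpace X]
    [NormedAddCommGroup Y] [NormedSpace ℂ Y] [CompleteSpace Y]
    (A : X →L[ℂ] Y) (B : Y →L[ℂ] X) :
    ∃ C > (0 : ℝ), ∀ l μ : ℂ, l ≠ 0 →
      l ∈ resolventSet ℂ (B.comp A) → μ ∈ resolventSet ℂ (B.comp A) →
      ‖Ring.inverse (B.comp A - l • (1 : X →L[ℂ] X))‖ ≤
        C * max 1 ‖Ring.inverse (A.comp B - l • (1 : Y →L[ℂ] Y))‖ *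
          max 1 ‖Ring.inverse (B.comp A - μ • (1 : X →L[ℂ] X))‖ / ‖l‖ *
          (‖μ‖ + ‖l - μ‖ * (2 + ‖l‖) * (2 + ‖μ‖)) := by
  refine ⟨‖A‖ * ‖B‖ + 2, by positivity, ?_⟩
  intro l μ hl0 hl hμ
  have hl' : IsUnit (B.comp A - l • (1 : X →L[ℂ] X)) := by
    have h := (spectrum.mem_resolventSet_iff.mp hl).neg
    rw [Algebra.algebraMap_eq_smul_one, neg_sub] at h
    exact h
  have hμ' : IsUnit (B.comp A - μ • (1 : X →L[ℂ] X)) := by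
    have h := (spectrum.mem_resolventSet_iff.mp hμ).neg
    rw [Algebra.algebraMap_eq_smul_one, neg_sub] at h
    exact h
  set R := Ring.inverse (B.comp A - l • (1 : X →L[ℂ] X)) with hRdef
  set Rμ := Ring.inverse (B.comp A - μ • (1 : X →L[ℂ] X)) with hRμdef
  have hR1 : (B.comp A - l • (1 : X →L[ℂ] X)) * R = 1 := Ring.mul_inverse_cancel _ hl'
  have hR2 : R * (B.comp A - l • (1 : X →L[ℂ] X)) = 1 := Ring.inverse_mul_cancel _ hl'
  have hRμ1 : (B.comp A - μ • (1 : X →L[ℂ] X)) * Rμ = 1 := Ring.mul_inverse_cancel _ hμ'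
  obtain ⟨hW1, hW2⟩ := aux16 A B hl0 R hR1 hR2
  have hS : IsUnit (A.comp B - l • (1 : Y →L[ℂ] Y)) :=
    isUnit_iff_exists.mpr ⟨_, hW1, hW2⟩
  set W := Ring.inverse (A.comp B - l • (1 : Y →L[ℂ] Y)) with hWdef
  have hW1' : (A.comp B - l • (1 : Y →L[ℂ] Y)) * W = 1 := Ring.mul_inverse_cancel _ hS
  have hW2' : W * (A.comp B - l • (1 : Y →L[ℂ] Y)) = 1 := Ring.inverse_mul_cancel _ hS
  obtain ⟨hZ1, _⟩ := aux16 B A hl0 W hW1' hW2'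
  -- R expressed through W
  have hRW : R = l⁻¹ • (B.comp (W.comp A) - 1) := left_inv_eq_right_inv hR2 hZ1
  -- norm bound via W
  have hRn : ‖R‖ ≤ (‖A‖ * ‖B‖ + 1) * max 1 ‖W‖ / ‖l‖ := by
    rw [hRW]
    have h0 : ‖B.comp (W.comp A) - 1‖ ≤ (‖A‖ * ‖B‖ + 1) * max 1 ‖W‖ := by
      calc ‖B.comp (W.comp A) - 1‖ ≤ ‖B.comp (W.comp A)‖ + ‖(1 : X →L[ℂ] X)‖ := norm_sub_le _ _
        _ ≤ ‖B‖ * (‖W‖ * ‖A‖) + 1 :=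
            add_le_add ((ContinuousLinearMap.opNorm_comp_le _ _).trans
              (by gcongr; exact ContinuousLinearMap.opNorm_comp_le _ _))
              ContinuousLinearMap.norm_id_le
        _ ≤ (‖A‖ * ‖B‖ + 1) * max 1 ‖W‖ := by
            have e : ‖B‖ * (‖W‖ * ‖A‖) = ‖A‖ * ‖B‖ * ‖W‖ := by ring
            rw [e]
            calc ‖A‖ * ‖B‖ * ‖W‖ + 1 ≤ ‖A‖ * ‖B‖ * max 1 ‖W‖ + 1 * max 1 ‖W‖ :=
                add_le_add (by gcongr <;> first | positivity | exact le_max_right _ _)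
                  (by rw [one_mul]; exact le_max_left _ _)
              _ = (‖A‖ * ‖B‖ + 1) * max 1 ‖W‖ := by ring
    calc ‖l⁻¹ • (B.comp (W.comp A) - 1)‖ ≤ ‖l⁻¹‖ * ‖B.comp (W.comp A) - 1‖ := ContinuousLinearMap.opNorm_smul_le _ _
      _ ≤ (‖A‖ * ‖B‖ + 1) * max 1 ‖W‖ / ‖l‖ := by
          rw [norm_inv, inv_mul_eq_div]
          gcongr
  -- resolvent identity
  have key : R - Rμ = (l - μ) • (R * Rμ) := by
    have e1 : (B.comp A - μ • (1 : X →L[ℂ] X)) - (B.comp A - l • (1 : X →L[ℂ] X))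
        = (l - μ) • (1 : X →L[ℂ] X) := by
      rw [sub_sub_sub_cancel_left, ← sub_smul]
    calc R - Rμ
        = R * ((B.comp A - μ • (1 : X →L[ℂ] X)) - (B.comp A - l • (1 : X →L[ℂ] X))) * Rμ := by
          rw [mul_sub, hR2, sub_mul, one_mul, mul_assoc, hRμ1, mul_one]
      _ = R * ((l - μ) • (1 : X →L[ℂ] X)) * Rμ := by rw [e1]
      _ = (l - μ) • (R * Rμ) := by rw [mul_smul_comm, mul_one, smul_mul_assoc]
  have hres : ‖R‖ ≤ ‖Rμ‖ + ‖l - μ‖ * ‖R‖ * ‖Rμ‖ := by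
    have : R = Rμ + (l - μ) • (R * Rμ) := by rw [← key]; abel
    calc ‖R‖ = ‖Rμ + (l - μ) • (R * Rμ)‖ := by rw [← this]
      _ ≤ ‖Rμ‖ + ‖(l - μ) • (R * Rμ)‖ := norm_add_le _ _
      _ ≤ ‖Rμ‖ + ‖l - μ‖ * ‖R‖ * ‖Rμ‖ := by
          have h5 := (ContinuousLinearMap.opNorm_smul_le (l - μ) (R * Rμ)).trans
            (mul_le_mul_of_nonneg_left (norm_mul_le R Rμ) (norm_nonneg _))
          have h6 : ‖l - μ‖ * (‖R‖ * ‖Rμ‖) = ‖l - μ‖ * ‖R‖ * ‖Rμ‖ := by ring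
          linarith
  -- arithmetic
  have hnl : (0:ℝ) < ‖l‖ := norm_pos_iff.mpr hl0
  have hln : ‖l‖ ≤ ‖μ‖ + ‖l - μ‖ := by
    calc ‖l‖ = ‖μ + (l - μ)‖ := by ring_nf
      _ ≤ ‖μ‖ + ‖l - μ‖ := norm_add_le _ _
  set m1 := max 1 ‖W‖ with hm1def
  set m2 := max 1 ‖Rμ‖ with hm2def
  have hm1 : (1:ℝ) ≤ m1 := le_max_left _ _
  have hm2 : (1:ℝ) ≤ m2 := le_max_left _ _
  have hRμm : ‖Rμ‖ ≤ m2 := le_max_right _ _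
  have h2' : ‖R‖ * ‖l‖ ≤ m2 * ‖l‖ + ‖l - μ‖ * ((‖A‖ * ‖B‖ + 1) * m1) * m2 := by
    have hx : ‖R‖ * ‖l‖ ≤ (‖A‖ * ‖B‖ + 1) * m1 := by
      rw [← le_div_iff₀ hnl]; exact hRn
    calc ‖R‖ * ‖l‖ ≤ (‖Rμ‖ + ‖l - μ‖ * ‖R‖ * ‖Rμ‖) * ‖l‖ := by gcongr
      _ = ‖Rμ‖ * ‖l‖ + ‖l - μ‖ * (‖R‖ * ‖l‖) * ‖Rμ‖ := by ring
      _ ≤ m2 * ‖l‖ + ‖l - μ‖ * ((‖A‖ * ‖B‖ + 1) * m1) * m2 := by gcongr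
  rw [div_mul_eq_mul_div, le_div_iff₀ hnl]
  have hab : (0:ℝ) ≤ ‖A‖ * ‖B‖ := by positivity
  have hd : (0:ℝ) ≤ ‖l - μ‖ := norm_nonneg _
  have hnμ : (0:ℝ) ≤ ‖μ‖ := norm_nonneg _
  have hm1' : (0:ℝ) ≤ m1 := zero_le_one.trans hm1
  have hm2' : (0:ℝ) ≤ m2 := zero_le_one.trans hm2
  have t1 : m2 * ‖l‖ ≤ m1 * m2 * (‖μ‖ + ‖l - μ‖) := by
    have u1 : m2 * ‖l‖ ≤ m2 * (‖μ‖ + ‖l - μ‖) := mul_le_mul_of_nonneg_left hln hm2'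
    have u2 : m2 * (‖μ‖ + ‖l - μ‖) ≤ m1 * (m2 * (‖μ‖ + ‖l - μ‖)) :=
      le_mul_of_one_le_left (by positivity) hm1
    nlinarith
  have t2 : ‖l - μ‖ * ((‖A‖ * ‖B‖ + 1) * m1) * m2
      ≤ (‖A‖ * ‖B‖ + 1) * m1 * m2 * (‖μ‖ + ‖l - μ‖) := by
    have u3 : (‖A‖ * ‖B‖ + 1) * m1 * m2 * ‖l - μ‖ ≤ (‖A‖ * ‖B‖ + 1) * m1 * m2 * (‖μ‖ + ‖l - μ‖) := by
      apply mul_le_mul_of_nonneg_left _ (by positivity)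
      linarith
    nlinarith
  have hP : (‖A‖ * ‖B‖ + 2) * m1 * m2 * (‖μ‖ + ‖l - μ‖)
      ≤ (‖A‖ * ‖B‖ + 2) * m1 * m2 * (‖μ‖ + ‖l - μ‖ * (2 + ‖l‖) * (2 + ‖μ‖)) := by
    have hQ : ‖μ‖ + ‖l - μ‖ ≤ ‖μ‖ + ‖l - μ‖ * (2 + ‖l‖) * (2 + ‖μ‖) := by
      nlinarith [mul_nonneg hd (norm_nonneg l), mul_nonneg hd hnμ,
        mul_nonneg (mul_nonneg hd (norm_nonneg l)) hnμ, hd]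
    have hc : (0:ℝ) ≤ (‖A‖ * ‖B‖ + 2) * m1 * m2 := by positivity
    exact mul_le_mul_of_nonneg_left hQ hc
  nlinarith [h2']
end

section
/- Let H be a complex Hilbert space with fundamental symmetry J and Krein inner product [x,y] = ⟨Jx,y⟩. Let T be a bounded operator with Krein adjoint T^[*] = JT*J. If λ > 0 is a spectral point of positive type of TT^[*] (every sequence of unit vectors x_n with (TT^[*] − λ)x_n → 0 satisfies liminf [x_n,x_n] > 0), then λ is a spectral point of positive type of T^[*]T. -/
open Filter Topology

/-! `A = T T^[*]` and `B = T^[*] T` are intertwined by `T` and `T^[*]`, so for `λ ≠ 0`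
normalizing `T^[*] xₙ` (resp. `T xₙ`) turns an approximate eigensequence of `A` into one of `B`
(resp. of `B` into one of `A`); these norms stay bounded below because `‖A xₙ‖ → |λ|`.
For the sign, `λ [xₙ,xₙ] ≈ [Bxₙ,xₙ] = [Txₙ,Txₙ] = ‖Txₙ‖² [zₙ,zₙ]` with `zₙ = Txₙ / ‖Txₙ‖`,
and `liminf [zₙ,zₙ] > 0` because `λ` is of positive type for `A`. -/

/-- `λ` is a spectral point of positive type of the operator `S` on the Krein space
`(H, [·,·])` with `[x,y] = ⟨Jx,y⟩`: `λ ∈ σ_ap(S)` and every approximate eigensequence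
of unit vectors satisfies `liminf [xₙ,xₙ] > 0`. -/
def IsSpectralPointOfPositiveType {H : Type*} [NormedAddCommGroup H]
    [InnerProductSpace ℂ H] [CompleteSpace H] (J S : H →L[ℂ] H) (l : ℝ) : Prop :=
  (∃ x : ℕ → H, (∀ n, ‖x n‖ = 1) ∧
      Tendsto (fun n => S (x n) - (l : ℂ) • x n) atTop (𝓝 0)) ∧
  ∀ x : ℕ → H, (∀ n, ‖x n‖ = 1) →
    Tendsto (fun n => S (x n) - (l : ℂ) • x n) atTop (𝓝 0) →
    0 < Filter.liminf (fun n => (inner ℂ (J (x n)) (x n) : ℂ).re) atTop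

section ApproxEigenseq

variable {E F : Type*} [NormedAddCommGroup E] [NormedSpace ℂ E]
  [NormedAddCommGroup F] [NormedSpace ℂ F]

def IsApproxEigenseq (S : E →L[ℂ] E) (μ : ℂ) (x : ℕ → E) : Prop :=
  (∀ n, ‖x n‖ = 1) ∧ Tendsto (fun n => S (x n) - μ • x n) atTop (𝓝 0)

namespace IsApproxEigenseq

variable {S : E →L[ℂ] E} {μ : ℂ} {x : ℕ → E}

theorem comp_add (hx : IsApproxEigenseq S μ x) (N : ℕ) :
    IsApproxEigenseq S μ (fun n => x (n + N)) :=
  ⟨fun n => hx.1 (n + N), (tendsto_add_atTop_iff_nat N).2 hx.2⟩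

theorem tendsto_norm_apply (hx : IsApproxEigenseq S μ x) :
    Tendsto (fun n => ‖S (x n)‖) atTop (𝓝 ‖μ‖) := by
  have hμx : ∀ n, ‖μ • x n‖ = ‖μ‖ := fun n => by rw [norm_smul, hx.1 n, mul_one]
  refine tendsto_iff_norm_sub_tendsto_zero.2 (squeeze_zero (fun n => norm_nonneg _) (fun n => ?_)
    (tendsto_zero_iff_norm_tendsto_zero.1 hx.2))
  rw [← hμx n, Real.norm_eq_abs]
  exact abs_norm_sub_norm_le (S (x n)) (μ • x n)

theorem exists_pos_le_norm_apply_add {C : E →L[ℂ] F} {D : F →L[ℂ] E}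
    (hx : IsApproxEigenseq (D ∘L C) μ x) (hμ : μ ≠ 0) :
    ∃ c > 0, ∃ N, ∀ n, c ≤ ‖C (x (n + N))‖ := by
  have hlt : ∀ᶠ n in atTop, ‖μ‖ / 2 < ‖D (C (x n))‖ :=
    hx.tendsto_norm_apply.eventually_const_lt (half_lt_self (norm_pos_iff.2 hμ))
  obtain ⟨N, hN⟩ := eventually_atTop.1 hlt
  refine ⟨‖μ‖ / 2 / (‖D‖ + 1), by positivity, N, fun n => ?_⟩
  rw [div_le_iff₀ (by positivity)]
  calc ‖μ‖ / 2 ≤ ‖D (C (x (n + N)))‖ := (hN _ (Nat.le_add_left N n)).le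
    _ ≤ ‖D‖ * ‖C (x (n + N))‖ := D.le_opNorm _
    _ ≤ ‖C (x (n + N))‖ * (‖D‖ + 1) := by nlinarith [norm_nonneg (C (x (n + N)))]

theorem normalize_apply {C : E →L[ℂ] F} {D : F →L[ℂ] E} {c : ℝ}
    (hx : IsApproxEigenseq (D ∘L C) μ x) (hc : 0 < c) (hCx : ∀ n, c ≤ ‖C (x n)‖) :
    IsApproxEigenseq (C ∘L D) μ (fun n => (‖C (x n)‖⁻¹ : ℂ) • C (x n)) := by
  have hpos : ∀ n, 0 < ‖C (x n)‖ := fun n => hc.trans_le (hCx n)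
  refine ⟨fun n => ?_, ?_⟩
  · rw [norm_smul, norm_inv, Complex.norm_real, Real.norm_of_nonneg (hpos n).le,
      inv_mul_cancel₀ (hpos n).ne']
  · have key : ∀ n, (C ∘L D) ((‖C (x n)‖⁻¹ : ℂ) • C (x n)) - μ • (‖C (x n)‖⁻¹ : ℂ) • C (x n)
        = (‖C (x n)‖⁻¹ : ℂ) • C ((D ∘L C) (x n) - μ • x n) := by
      intro n
      simp only [map_smul, map_sub, ContinuousLinearMap.comp_apply, smul_sub, smul_comm μ]
    simp_rw [key]
    refine squeeze_zero_norm (fun n => ?_) (by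
      simpa using (tendsto_zero_iff_norm_tendsto_zero.1 hx.2).const_mul (c⁻¹ * ‖C‖))
    rw [norm_smul, norm_inv, Complex.norm_real, Real.norm_of_nonneg (hpos n).le]
    calc ‖C (x n)‖⁻¹ * ‖C ((D ∘L C) (x n) - μ • x n)‖
        ≤ c⁻¹ * (‖C‖ * ‖(D ∘L C) (x n) - μ • x n‖) := by
          gcongr
          · exact hCx n
          · exact C.le_opNorm _
      _ = c⁻¹ * ‖C‖ * ‖(D ∘L C) (x n) - μ • x n‖ := by ring

end IsApproxEigenseq

end ApproxEigenseq

theorem liminf_pos_of_tendsto_sq_mul_sub {ι : Type*} {f : Filter ι} [f.NeBot] {a b r : ι → ℝ}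
    {c l : ℝ} (hc : 0 < c) (hl : 0 < l) (ha : IsBoundedUnder (· ≤ ·) f a)
    (hb : IsBoundedUnder (· ≥ ·) f b) (hb0 : 0 < liminf b f) (hr : ∀ᶠ i in f, c ≤ r i)
    (h : Tendsto (fun i => r i ^ 2 * b i - l * a i) f (𝓝 0)) :
    0 < liminf a f := by
  set d := liminf b f
  have hb_half : ∀ᶠ i in f, d / 2 < b i := eventually_lt_of_lt_liminf (by linarith) hb
  have herr : ∀ᶠ i in f, r i ^ 2 * b i - l * a i < c ^ 2 * d / 4 :=
    h.eventually_lt_const (by positivity)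
  have ha_low : ∀ᶠ i in f, c ^ 2 * d / 4 / l ≤ a i := by
    filter_upwards [hb_half, herr, hr] with i hbi herri hri
    have hsq : c ^ 2 ≤ r i ^ 2 := pow_le_pow_left₀ hc.le hri 2
    rw [div_le_iff₀ hl]
    nlinarith
  exact (by positivity : 0 < c ^ 2 * d / 4 / l).trans_le
    (le_liminf_of_le ha.isCoboundedUnder_ge ha_low)

section Krein

variable {H : Type*} [NormedAddCommGroup H] [InnerProductSpace ℂ H]

theorem re_inner_apply_self_mem_Icc (J : H →L[ℂ] H) {x : H} (hx : ‖x‖ = 1) :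
    (inner ℂ (J x) x).re ∈ Set.Icc (-‖J‖) ‖J‖ := by
  refine abs_le.1 ((Complex.abs_re_le_norm _).trans ?_)
  calc ‖inner ℂ (J x) x‖ ≤ ‖J x‖ * ‖x‖ := norm_inner_le_norm _ _
    _ ≤ ‖J‖ * ‖x‖ * ‖x‖ := by gcongr; exact J.le_opNorm x
    _ = ‖J‖ := by rw [hx, mul_one, mul_one]

theorem sq_norm_mul_re_inner_apply_inv_norm_smul (J : H →L[ℂ] H) {y : H} (hy : y ≠ 0) :
    ‖y‖ ^ 2 * (inner ℂ (J ((‖y‖⁻¹ : ℂ) • y)) ((‖y‖⁻¹ : ℂ) • y)).re = (inner ℂ (J y) y).re := by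
  rw [map_smul, inner_smul_left, inner_smul_right, ← mul_assoc, map_inv₀, Complex.conj_ofReal,
    ← Complex.ofReal_inv, ← Complex.ofReal_mul, Complex.re_ofReal_mul, ← mul_assoc,
    ← mul_inv, ← sq, mul_inv_cancel₀ (pow_ne_zero 2 (norm_ne_zero_iff.2 hy)), one_mul]

/-- `[Tx, Tx] = [T^[*]Tx, x]` for the Krein adjoint `T^[*] = J T* J`. -/
theorem inner_apply_apply_self_eq [CompleteSpace H] {J : H →L[ℂ] H} (hJ2 : J.comp J = 1)
    (T : H →L[ℂ] H) (x : H) :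
    inner ℂ (J (T x)) (T x) =
      inner ℂ (J (((J.comp ((ContinuousLinearMap.adjoint T).comp J)).comp T) x)) x := by
  have hJJ : ∀ v, J (J v) = v := fun v => by simpa using congrArg (· v) hJ2
  simp only [ContinuousLinearMap.comp_apply, hJJ, ContinuousLinearMap.adjoint_inner_left]

theorem IsApproxEigenseq.tendsto_re_inner_sub {S : H →L[ℂ] H} {l : ℝ} {x : ℕ → H}
    (hx : IsApproxEigenseq S l x) (J : H →L[ℂ] H) :
    Tendsto (fun n => (inner ℂ (J (S (x n))) (x n)).re - l * (inner ℂ (J (x n)) (x n)).re)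
      atTop (𝓝 0) := by
  have hre : ∀ n, (inner ℂ (J (S (x n))) (x n)).re - l * (inner ℂ (J (x n)) (x n)).re
      = (inner ℂ (J (S (x n) - (l : ℂ) • x n)) (x n)).re := fun n => by
    rw [map_sub, map_smul, inner_sub_left, inner_smul_left, Complex.conj_ofReal, Complex.sub_re,
      Complex.re_ofReal_mul]
  simp_rw [hre]
  refine squeeze_zero_norm (fun n => ?_) (by simpa using
    (tendsto_zero_iff_norm_tendsto_zero.1 hx.2).const_mul ‖J‖)
  calc ‖(inner ℂ (J (S (x n) - (l : ℂ) • x n)) (x n)).re‖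
      ≤ ‖inner ℂ (J (S (x n) - (l : ℂ) • x n)) (x n)‖ := Complex.abs_re_le_norm _
    _ ≤ ‖J (S (x n) - (l : ℂ) • x n)‖ * ‖x n‖ := norm_inner_le_norm _ _
    _ ≤ ‖J‖ * ‖S (x n) - (l : ℂ) • x n‖ := by rw [hx.1 n, mul_one]; exact J.le_opNorm _

theorem isSpectralPointOfPositiveType_iff [CompleteSpace H] {J S : H →L[ℂ] H} {l : ℝ} :
    IsSpectralPointOfPositiveType J S l ↔ (∃ x, IsApproxEigenseq S l x) ∧
      ∀ x, IsApproxEigenseq S l x → 0 < liminf (fun n => (inner ℂ (J (x n)) (x n)).re) atTop := by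
  simp only [IsSpectralPointOfPositiveType, IsApproxEigenseq, and_imp]

end Krein

theorem stmt17_general {H : Type*} [NormedAddCommGroup H] [InnerProductSpace ℂ H] [CompleteSpace H]
    (J : H →L[ℂ] H)
    (hJ2 : J.comp J = 1) (T : H →L[ℂ] H) (l : ℝ) (hl : 0 < l)
    (h : IsSpectralPointOfPositiveType J
      (T.comp (J.comp ((ContinuousLinearMap.adjoint T).comp J))) l) :
    IsSpectralPointOfPositiveType J
      ((J.comp ((ContinuousLinearMap.adjoint T).comp J)).comp T) l := by
  rw [isSpectralPointOfPositiveType_iff] at h ⊢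
  have hl0 : (l : ℂ) ≠ 0 := Complex.ofReal_ne_zero.2 hl.ne'
  refine ⟨?_, fun x hx => ?_⟩
  · obtain ⟨x, hx⟩ := h.1
    obtain ⟨c, hc, N, hN⟩ := hx.exists_pos_le_norm_apply_add hl0
    exact ⟨_, (hx.comp_add N).normalize_apply hc hN⟩
  obtain ⟨c, hc, N, hN⟩ := hx.exists_pos_le_norm_apply_add hl0
  have hy := hx.comp_add N
  have hz := hy.normalize_apply hc hN
  rw [← liminf_nat_add _ N]
  refine liminf_pos_of_tendsto_sq_mul_sub hc hl
    (isBoundedUnder_of ⟨‖J‖, fun n => (re_inner_apply_self_mem_Icc J (hy.1 n)).2⟩)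
    (isBoundedUnder_of ⟨-‖J‖, fun n => (re_inner_apply_self_mem_Icc J (hz.1 n)).1⟩)
    (h.2 _ hz) (.of_forall hN) ?_
  refine (hy.tendsto_re_inner_sub J).congr fun n => ?_
  rw [sq_norm_mul_re_inner_apply_inv_norm_smul J (norm_pos_iff.1 (hc.trans_le (hN n))),
    inner_apply_apply_self_eq hJ2]

/-- If `λ > 0` is a spectral point of positive type of `TT^[*]`, then `λ`
is a spectral point of positive type of `T^[*]T`. -/
theorem stmt17 {H : Type*} [NormedAddCommGroup H] [InnerProductSpace ℂ H] [CompleteSpace H]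
    (J : H →L[ℂ] H) (hJsa : ContinuousLinearMap.adjoint J = J)
    (hJ2 : J.comp J = 1) (T : H →L[ℂ] H) (l : ℝ) (hl : 0 < l)
    (h : IsSpectralPointOfPositiveType J
      (T.comp (J.comp ((ContinuousLinearMap.adjoint T).comp J))) l) :
    IsSpectralPointOfPositiveType J
      ((J.comp ((ContinuousLinearMap.adjoint T).comp J)).comp T) l :=
  stmt17_general J hJ2 T l hl h
end
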